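/- arXiv:2501.09564 — 4 statements merged into one kernel-verified Lean document; each statement's English description precedes it below -/
import Mathlib

section
/- (Rademacher–Menshov inequality) Let $\mathfrak{s} \in \mathbb{N}_0$ and $2 \le r < \infty$. For any sequence $(a_j : 0 \le j \le 2^{\mathfrak{s}})$ of complex numbers, $\|(a_j)_{j \in [0, 2^{\mathfrak{s}}]}\|_{V^r} \le \sqrt{2} \sum_{i=0}^{\mathfrak{s}} \Big( \sum_{j=0}^{2^{\mathfrak{s}-i}-1} |a_{(j+1)2^i} - a_{j 2^i}|^2 \Big)^{1/2}$. -/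
open scoped ENNReal

/-- The `r`-variation seminorm of a complex sequence `a` over an index set `I ⊆ ℕ`. -/
noncomputable def variationSeminorm (r : ℝ) (I : Set ℕ) (a : ℕ → ℂ) : ℝ≥0∞ :=
  ⨆ (J : ℕ) (t : ℕ → ℕ) (_ : StrictMonoOn t (Set.Iic J)) (_ : ∀ j ≤ J, t j ∈ I),
    (∑ j ∈ Finset.range J, (‖a (t (j + 1)) - a (t j)‖₊ : ℝ≥0∞) ^ r) ^ (1 / r)

open scoped NNReal

namespace RM


/-- floor rounding to a multiple of `2^i` -/
def qd (i n : ℕ) : ℕ := n / 2^i * 2^i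

lemma qd_le (i n : ℕ) : qd i n ≤ n := Nat.div_mul_le_self n _

lemma qd_dvd (i n : ℕ) : 2^i ∣ qd i n := ⟨n / 2^i, mul_comm _ _⟩

lemma qd_zero (n : ℕ) : qd 0 n = n := by simp [qd]

lemma qd_anti (n : ℕ) {i j : ℕ} (h : i ≤ j) : qd j n ≤ qd i n := by
  have h2 : (2:ℕ)^j = 2^i * 2^(j-i) := by rw [← pow_add]; congr 1; omega
  rw [qd, qd, h2, ← Nat.div_div_eq_div_mul]
  calc n / 2^i / 2^(j-i) * (2^i * 2^(j-i))
      = (n / 2^i / 2^(j-i) * 2^(j-i)) * 2^i := by ring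
    _ ≤ (n / 2^i) * 2^i := Nat.mul_le_mul_right _ (Nat.div_mul_le_self _ _)

lemma qd_step (i n : ℕ) : qd i n = qd (i+1) n ∨ qd i n = qd (i+1) n + 2^i := by
  have h : n / 2^i / 2 = n / 2^(i+1) := by
    rw [Nat.div_div_eq_div_mul, pow_succ]
  have hf : n / 2^i = 2*(n / 2^(i+1)) ∨ n / 2^i = 2*(n / 2^(i+1))+1 := by omega
  rcases hf with hf | hf
  · left; rw [qd, qd, hf, pow_succ]; ring
  · right; rw [qd, qd, hf, pow_succ]; ring

lemma Q_step (n w k i : ℕ) (hw : w = qd k n) :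
    max (qd i n) w = max (qd (i+1) n) w ∨
      (max (qd i n) w = max (qd (i+1) n) w + 2^i ∧ 2^i ∣ max (qd (i+1) n) w) := by
  by_cases h : w ≤ qd (i+1) n
  · have h1 : qd (i+1) n ≤ qd i n := qd_anti n (Nat.le_succ i)
    rw [max_eq_left h, max_eq_left (le_trans h h1)]
    rcases qd_step i n with he | he
    · left; exact he
    · right; exact ⟨he, dvd_trans (pow_dvd_pow 2 (Nat.le_succ i)) (qd_dvd _ _)⟩
  · push_neg at h
    rw [max_eq_right h.le]
    by_cases h2 : qd i n ≤ w
    · left; rw [max_eq_right h2]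
    · exfalso
      push_neg at h2
      rcases Nat.lt_or_ge i k with hik | hik
      · have : qd k n ≤ qd (i+1) n := qd_anti n hik
        omega
      · have : qd i n ≤ qd k n := qd_anti n hik
        omega

lemma Q_top (n w k K : ℕ) (hw : w = qd k n) (hk : k ≤ K) : max (qd K n) w = w :=
  max_eq_right (hw ▸ qd_anti n hk)


lemma decomp_core (s : ℕ) (a : ℕ → ℂ) (m n mid kd ka : ℕ)
    (hmn : m ≤ n) (hn : n ≤ 2^s) (hm1 : m ≤ mid) (hm2 : mid ≤ n)
    (hd : mid = qd kd n) (hdk : kd ≤ s+1)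
    (ha : 2^s - mid = qd ka (2^s - m)) (hak : ka ≤ s+1) :
    ∃ lo hi : Bool → ℕ → ℕ,
      (a n - a m = ∑ i ∈ Finset.range (s+1),
        ((a (hi true i) - a (lo true i)) + (a (hi false i) - a (lo false i)))) ∧
      (∀ b i, i ≤ s → hi b i = lo b i ∨
        (hi b i = lo b i + 2^i ∧ 2^i ∣ lo b i ∧ m ≤ lo b i ∧ hi b i ≤ n ∧
          (b = true → hi b i ≤ mid) ∧ (b = false → mid ≤ lo b i))) := by
  set N := 2^s with hN
  have hmidN : mid ≤ N := le_trans hm2 hn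
  have hmN : m ≤ N := le_trans hmn hn
  set B : ℕ → ℕ := fun i => max (qd i (N - m)) (N - mid) with hB
  set D : ℕ → ℕ := fun i => max (qd i n) mid with hD
  have hBle : ∀ i, B i ≤ N - m := fun i =>
    max_le (qd_le _ _) (Nat.sub_le_sub_left hm1 N)
  have hBge : ∀ i, N - mid ≤ B i := fun i => le_max_right _ _
  have hDle : ∀ i, D i ≤ n := fun i => max_le (qd_le _ _) hm2
  have hDge : ∀ i, mid ≤ D i := fun i => le_max_right _ _
  have hstepB : ∀ i, B i = B (i+1) ∨ (B i = B (i+1) + 2^i ∧ 2^i ∣ B (i+1)) :=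
    fun i => Q_step (N-m) (N-mid) ka i ha
  have hstepD : ∀ i, D i = D (i+1) ∨ (D i = D (i+1) + 2^i ∧ 2^i ∣ D (i+1)) :=
    fun i => Q_step n mid kd i hd
  refine ⟨fun b i => bif b then N - B i else D (i+1),
          fun b i => bif b then N - B (i+1) else D i, ?_, ?_⟩
  · simp only [cond_true, cond_false]
    rw [Finset.sum_add_distrib, Finset.sum_range_sub (fun i => a (N - B i)),
        Finset.sum_range_sub' (fun i => a (D i))]
    have hB0 : B 0 = N - m := by
      show qd 0 (N-m) ⊔ (N - mid) = N - m
      rw [qd_zero]; exact max_eq_left (Nat.sub_le_sub_left hm1 N)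
    have hBtop : B (s+1) = N - mid := Q_top _ _ _ _ ha hak
    have hD0 : D 0 = n := by
      show qd 0 n ⊔ mid = n
      rw [qd_zero]; exact max_eq_left hm2
    have hDtop : D (s+1) = mid := Q_top _ _ _ _ hd hdk
    rw [hB0, hBtop, hD0, hDtop]
    have e1 : N - (N - m) = m := by omega
    have e2 : N - (N - mid) = mid := by omega
    rw [e1, e2]; ring
  · intro b i hi
    have hdvdN : (2:ℕ)^i ∣ N := pow_dvd_pow 2 hi
    cases b
    · -- descending side
      simp only [cond_false]
      rcases hstepD i with he | ⟨he, hdvd⟩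
      · left; exact he
      · right
        exact ⟨he, hdvd, le_trans hm1 (hDge _), hDle i,
          fun h => by simp at h, fun _ => hDge _⟩
    · -- ascending side
      simp only [cond_true]
      rcases hstepB i with he | ⟨he, hdvd⟩
      · left; rw [he]
      · right
        have h1 : B i ≤ N := le_trans (hBle i) (Nat.sub_le _ _)
        have h2 : B (i+1) ≤ N := le_trans (hBle (i+1)) (Nat.sub_le _ _)
        have hBi := hBle i
        have hBg := hBge (i+1)
        have hdvdBi : 2^i ∣ B i := by rw [he]; exact dvd_add hdvd dvd_rfl
        exact ⟨by omega, Nat.dvd_sub hdvdN hdvdBi, by omega, by omega,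
          fun _ => by omega, fun h => by simp at h⟩

lemma decomp (s : ℕ) (a : ℕ → ℂ) (m n : ℕ) :
    ∃ (lo hi : Bool → ℕ → ℕ) (mid : ℕ),
      m < n → n ≤ 2^s →
      ((a n - a m = ∑ i ∈ Finset.range (s+1),
        ((a (hi true i) - a (lo true i)) + (a (hi false i) - a (lo false i)))) ∧
      (∀ b i, i ≤ s → hi b i = lo b i ∨
        (hi b i = lo b i + 2^i ∧ 2^i ∣ lo b i ∧ m ≤ lo b i ∧ hi b i ≤ n ∧
          (b = true → hi b i ≤ mid) ∧ (b = false → mid ≤ lo b i)))) := by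
  by_cases h : m < n ∧ n ≤ 2^s
  case neg => exact ⟨fun _ _ => 0, fun _ _ => 0, 0, fun h1 h2 => absurd ⟨h1, h2⟩ h⟩
  obtain ⟨hmn, hn⟩ := h
  set ℓ := Nat.findGreatest (fun i => m / 2^i ≠ n / 2^i) s with hldef
  have hl_le : ℓ ≤ s := Nat.findGreatest_le s
  have h1 : m / 2^ℓ ≠ n / 2^ℓ := by
    exact Nat.findGreatest_spec (P := fun i => m / 2^i ≠ n / 2^i) (Nat.zero_le s)
      (by simpa using hmn.ne)
  have h2 : m / 2^(ℓ+1) = n / 2^(ℓ+1) := by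
    rcases Nat.lt_or_ge ℓ s with hls | hls
    · by_contra hne
      exact Nat.findGreatest_is_greatest (Nat.lt_succ_self ℓ) hls hne
    · have hle : ℓ = s := le_antisymm hl_le hls
      have hm' : m < 2^(ℓ+1) := by
        calc m < n := hmn
        _ ≤ 2^s := hn
        _ ≤ 2^(ℓ+1) := Nat.pow_le_pow_right (by norm_num) (by omega)
      have hn' : n ≤ 2^s := hn
      have hn'' : n < 2^(ℓ+1) ∨ n = 2^s := by
        rcases eq_or_lt_of_le hn' with h | h
        · right; exact h
        · left; calc n < 2^s := h
                 _ ≤ 2^(ℓ+1) := Nat.pow_le_pow_right (by norm_num) (by omega)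
      rcases hn'' with h | h
      · rw [Nat.div_eq_of_lt hm', Nat.div_eq_of_lt h]
      · -- n = 2^s = 2^ℓ, so n / 2^(ℓ+1) = ... ; both m and n handled by: n = 2^ℓ
        subst h
        rw [hle] at hm' ⊢
        rw [Nat.div_eq_of_lt hm']
        rw [Nat.pow_succ]
        rw [Nat.div_eq_of_lt (by omega)]
  set u := m / 2^ℓ with hu
  have hdd : ∀ x : ℕ, x / 2^(ℓ+1) = x / 2^ℓ / 2 := fun x => by
    rw [Nat.div_div_eq_div_mul, pow_succ]
  have huv : n / 2^ℓ = u + 1 ∧ u % 2 = 0 := by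
    have h2' := h2
    rw [hdd m, hdd n] at h2'
    have hle : m / 2^ℓ ≤ n / 2^ℓ := Nat.div_le_div_right hmn.le
    omega
  have hc : 0 < (2:ℕ)^ℓ := pow_pos (by norm_num) ℓ
  by_cases hdvd : 2^ℓ ∣ m
  · -- mid = m
    have hrep_d : m = qd (ℓ+1) n := by
      have hn2 : n / 2^(ℓ+1) = u / 2 := by rw [hdd n, huv.1]; omega
      rw [qd, hn2, pow_succ]
      have e1 : u / 2 * (2^ℓ * 2) = (u / 2 * 2) * 2^ℓ := by ring
      have e2 : u / 2 * 2 = u := by omega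
      rw [e1, e2, hu, Nat.div_mul_cancel hdvd]
    have hrep_a : 2^s - m = qd 0 (2^s - m) := (qd_zero _).symm
    obtain ⟨lo, hi, hsum, hstep⟩ := decomp_core s a m n m (ℓ+1) 0 hmn.le hn le_rfl hmn.le
      hrep_d (by omega) hrep_a (by omega)
    exact ⟨lo, hi, m, fun _ _ => ⟨hsum, hstep⟩⟩
  · -- mid = (u+1) * 2^ℓ
    set c := (2:ℕ)^ℓ with hcdef
    set mid := (u+1) * c with hmid
    have hdm : u * c + m % c = m := by rw [hu, Nat.mul_comm]; exact Nat.div_add_mod m c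
    have hrlt : m % c < c := Nat.mod_lt _ hc
    have hr0 : m % c ≠ 0 := fun h => hdvd (Nat.dvd_of_mod_eq_zero h)
    have hrep_d : mid = qd ℓ n := by rw [qd, huv.1]
    have hmid_le_n : mid ≤ n := by rw [hrep_d]; exact qd_le _ _
    have emid : mid = u * c + c := by rw [hmid]; ring
    have hm_le_mid : m ≤ mid := by omega
    -- N = C * c
    have hCc : (2:ℕ)^s = 2^(s-ℓ) * c := by rw [hcdef, ← pow_add]; congr 1; omega
    set C := (2:ℕ)^(s-ℓ) with hC
    have huC : u * c + c ≤ C * c := by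
      have : mid ≤ C * c := le_trans hmid_le_n (by rw [hCc] at hn; exact hn)
      omega
    have hrep_a : 2^s - mid = qd ℓ (2^s - m) := by
      have e1 : (C - u - 1) * c = C * c - u * c - c := by
        rw [Nat.sub_mul, Nat.sub_mul, one_mul]
      have e2 : 2^s - m = (c - m % c) + (C - u - 1) * c := by
        rw [hCc, e1]
        omega
      rw [qd, e2]
      rw [Nat.add_mul_div_right _ _ hc, Nat.div_eq_of_lt (by omega)]
      have e4 : (0 + (C - u - 1)) * c = C * c - u * c - c := by rw [Nat.zero_add, e1]
      rw [e4]
      rw [hCc]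
      omega
    obtain ⟨lo, hi, hsum, hstep⟩ := decomp_core s a m n mid ℓ ℓ hmn.le hn hm_le_mid hmid_le_n
      hrep_d (by omega) hrep_a (by omega)
    exact ⟨lo, hi, mid, fun _ _ => ⟨hsum, hstep⟩⟩


lemma sq_add_le (x y : ℝ≥0∞) : (x + y) ^ (2:ℝ) ≤ 2 * (x ^ (2:ℝ) + y ^ (2:ℝ)) := by
  have h2 : ((2:ℕ):ℝ) = (2:ℝ) := by norm_num
  rw [← h2, ENNReal.rpow_natCast, ENNReal.rpow_natCast, ENNReal.rpow_natCast]
  rcases eq_or_ne x ⊤ with rfl | hx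
  · rw [top_add]
    simp [ENNReal.top_pow, ENNReal.mul_top]
  rcases eq_or_ne y ⊤ with rfl | hy
  · rw [add_top]
    simp [ENNReal.top_pow, ENNReal.mul_top]
  lift x to NNReal using hx
  lift y to NNReal using hy
  have key : (x + y) ^ 2 ≤ 2 * (x ^ 2 + y ^ 2) := by
    rw [← NNReal.coe_le_coe]
    push_cast
    nlinarith [sq_nonneg ((x:ℝ) - (y:ℝ))]
  calc ((x:ℝ≥0∞) + (y:ℝ≥0∞)) ^ 2 = (((x + y : NNReal)) : ℝ≥0∞) ^ 2 := by push_cast; ring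
    _ = (((x+y)^2 : NNReal) : ℝ≥0∞) := by push_cast; ring
    _ ≤ ((2 * (x^2 + y^2) : NNReal) : ℝ≥0∞) := by exact_mod_cast key
    _ = 2 * ((x:ℝ≥0∞)^2 + (y:ℝ≥0∞)^2) := by push_cast; ring

lemma sum_rpow_le {ι : Type*} (T : Finset ι) (y : ι → ℝ≥0∞) {p : ℝ} (hp : 1 ≤ p) :
    ∑ i ∈ T, y i ^ p ≤ (∑ i ∈ T, y i) ^ p := by
  classical
  induction T using Finset.induction with
  | empty => simp [ENNReal.zero_rpow_of_pos (lt_of_lt_of_le zero_lt_one hp)]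
  | @insert a T hx ih =>
      rw [Finset.sum_insert hx, Finset.sum_insert hx]
      calc y a ^ p + ∑ i ∈ T, y i ^ p ≤ y a ^ p + (∑ i ∈ T, y i) ^ p := by
            exact add_le_add_right ih _
        _ ≤ (y a + ∑ i ∈ T, y i) ^ p := ENNReal.add_rpow_le_rpow_add _ _ hp

lemma lp_mono {ι : Type*} (T : Finset ι) (x : ι → ℝ≥0∞) {r : ℝ} (hr : 2 ≤ r) :
    (∑ j ∈ T, x j ^ r) ^ (1/r) ≤ (∑ j ∈ T, x j ^ (2:ℝ)) ^ (1/(2:ℝ)) := by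
  have hr0 : (0:ℝ) < r := by linarith
  have key : ∑ j ∈ T, x j ^ r ≤ (∑ j ∈ T, x j ^ (2:ℝ)) ^ (r/2) := by
    calc ∑ j ∈ T, x j ^ r = ∑ j ∈ T, (x j ^ (2:ℝ)) ^ (r/2) := by
          refine Finset.sum_congr rfl fun j _ => ?_
          rw [← ENNReal.rpow_mul]
          congr 1; ring
      _ ≤ _ := sum_rpow_le T _ (by linarith)
  calc (∑ j ∈ T, x j ^ r) ^ (1/r) ≤ ((∑ j ∈ T, x j ^ (2:ℝ)) ^ (r/2)) ^ (1/r) :=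
        ENNReal.rpow_le_rpow key (by positivity)
    _ = (∑ j ∈ T, x j ^ (2:ℝ)) ^ (1/(2:ℝ)) := by
        rw [← ENNReal.rpow_mul]
        congr 1
        field_simp

lemma minkowski {ι κ : Type*} (T : Finset ι) (S : Finset κ) (f : ι → κ → ℝ≥0∞) :
    (∑ j ∈ S, (∑ i ∈ T, f i j) ^ (2:ℝ)) ^ (1/(2:ℝ)) ≤
      ∑ i ∈ T, (∑ j ∈ S, f i j ^ (2:ℝ)) ^ (1/(2:ℝ)) := by
  classical
  induction T using Finset.induction with
  | empty =>
      simp only [Finset.sum_empty]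
      rw [show ((0:ℝ≥0∞) ^ (2:ℝ)) = 0 from ENNReal.zero_rpow_of_pos (by norm_num)]
      simp [ENNReal.zero_rpow_of_pos]
  | @insert b T hx ih =>
      simp only [Finset.sum_insert hx]
      calc (∑ j ∈ S, (f b j + ∑ i ∈ T, f i j) ^ (2:ℝ)) ^ (1/(2:ℝ))
          ≤ (∑ j ∈ S, f b j ^ (2:ℝ)) ^ (1/(2:ℝ))
            + (∑ j ∈ S, (∑ i ∈ T, f i j) ^ (2:ℝ)) ^ (1/(2:ℝ)) :=
            ENNReal.Lp_add_le S _ _ one_le_two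
        _ ≤ _ := add_le_add_right ih _


end RM

open Finset

/-- Rademacher–Menshov inequality: for `2 ≤ r < ∞` and any complex sequence
`(a_j : 0 ≤ j ≤ 2^s)`,
`‖(a_j)_{0≤j≤2^s}‖_{V^r} ≤ √2 ∑_{i=0}^{s} (∑_{j=0}^{2^{s-i}-1} |a_{(j+1)2^i} - a_{j2^i}|²)^{1/2}`. -/
theorem statement4 (s : ℕ) (r : ℝ) (hr : 2 ≤ r) (a : ℕ → ℂ) :
    variationSeminorm r (Set.Iic (2 ^ s)) a ≤
      ENNReal.ofReal (Real.sqrt 2) *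
        ∑ i ∈ Finset.range (s + 1),
          (∑ j ∈ Finset.range (2 ^ (s - i)),
              (‖a ((j + 1) * 2 ^ i) - a (j * 2 ^ i)‖₊ : ℝ≥0∞) ^ (2 : ℝ)) ^ (1 / (2 : ℝ)) := by
  classical
  rw [variationSeminorm]
  refine iSup_le fun J => iSup_le fun t => iSup_le fun ht => iSup_le fun htI => ?_
  choose lo hi mid H using fun j : ℕ => RM.decomp s a (t j) (t (j+1))
  have hJle : ∀ j, j < J → t j < t (j+1) ∧ t (j+1) ≤ 2^s := fun j hj =>
    ⟨ht (Set.mem_Iic.2 (by omega)) (Set.mem_Iic.2 (by omega)) (by omega),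
     Set.mem_Iic.1 (htI (j+1) (by omega))⟩
  have hps : ∀ i : ℕ, (2:ℕ)^s = 2^(s-i) * 2^i ∨ ¬ i ≤ s := fun i => by
    by_cases h : i ≤ s
    · left; rw [← pow_add]; congr 1; omega
    · right; exact h
  have counting : ∀ i, i ≤ s →
      ∑ j ∈ range J, ((‖a (hi j true i) - a (lo j true i)‖₊ : ℝ≥0∞) ^ (2:ℝ)
        + (‖a (hi j false i) - a (lo j false i)‖₊ : ℝ≥0∞) ^ (2:ℝ))
      ≤ ∑ u ∈ range (2^(s-i)),
          (‖a ((u + 1) * 2 ^ i) - a (u * 2 ^ i)‖₊ : ℝ≥0∞) ^ (2:ℝ) := by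
    intro i his
    set F : ℕ × Bool → ℝ≥0∞ :=
      fun x => (‖a (hi x.1 x.2 i) - a (lo x.1 x.2 i)‖₊ : ℝ≥0∞) ^ (2:ℝ) with hF
    set A : Finset (ℕ × Bool) := (range J) ×ˢ (Finset.univ : Finset Bool) with hA
    set g : ℕ × Bool → ℕ := fun x => lo x.1 x.2 i / 2^i with hg
    have hpow : (0:ℕ) < 2^i := pow_pos (by norm_num) i
    have hsplit : (2:ℕ)^s = 2^(s-i) * 2^i := (hps i).resolve_right (by omega)
    have P : ∀ x ∈ A.filter (fun x => F x ≠ 0),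
        x.1 < J ∧ lo x.1 x.2 i = g x * 2^i ∧ hi x.1 x.2 i = lo x.1 x.2 i + 2^i ∧
        t x.1 ≤ lo x.1 x.2 i ∧ hi x.1 x.2 i ≤ t (x.1 + 1) ∧
        (x.2 = true → hi x.1 x.2 i ≤ mid x.1) ∧ (x.2 = false → mid x.1 ≤ lo x.1 x.2 i) := by
      intro x hx
      rw [Finset.mem_filter] at hx
      obtain ⟨hxA, hxne⟩ := hx
      have hx1 : x.1 < J := Finset.mem_range.1 (Finset.mem_product.1 hxA).1
      obtain ⟨h_t, h_le⟩ := hJle x.1 hx1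
      rcases (H x.1 h_t h_le).2 x.2 i his with heq | hprops
      · exact absurd (by simp [hF, heq, ENNReal.zero_rpow_of_pos]) hxne
      · exact ⟨hx1, (Nat.div_mul_cancel hprops.2.1).symm, hprops.1, hprops.2.2.1,
          hprops.2.2.2.1, hprops.2.2.2.2.1, hprops.2.2.2.2.2⟩
    have hinj : ∀ x ∈ A.filter (fun x => F x ≠ 0), ∀ x' ∈ A.filter (fun x => F x ≠ 0),
        g x = g x' → x = x' := by
      intro x hx x' hx' hgg
      obtain ⟨hx1, hlo, hhi, htlo, hhit, hmid1, hmid2⟩ := P x hx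
      obtain ⟨hx1', hlo', hhi', htlo', hhit', hmid1', hmid2'⟩ := P x' hx'
      have hloeq : lo x.1 x.2 i = lo x'.1 x'.2 i := by rw [hlo, hlo', hgg]
      rcases Nat.lt_trichotomy x.1 x'.1 with hlt | heq1 | hlt
      · exfalso
        have hmono : t (x.1+1) ≤ t x'.1 :=
          ht.monotoneOn (Set.mem_Iic.2 (by omega)) (Set.mem_Iic.2 (by omega)) (by omega)
        omega
      · obtain ⟨j, b⟩ := x
        obtain ⟨j', b'⟩ := x'
        simp only at heq1 hloeq hhi hhi' hmid1 hmid2 hmid1' hmid2'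
        subst heq1
        cases b <;> cases b'
        · rfl
        · exfalso
          have h1 := hmid2 rfl
          have h2 := hmid1' rfl
          omega
        · exfalso
          have h1 := hmid1 rfl
          have h2 := hmid2' rfl
          omega
        · rfl
      · exfalso
        have hmono : t (x'.1+1) ≤ t x.1 :=
          ht.monotoneOn (Set.mem_Iic.2 (by omega)) (Set.mem_Iic.2 (by omega)) (by omega)
        omega
    have hvals : ∀ x ∈ A.filter (fun x => F x ≠ 0),
        F x = (‖a ((g x + 1) * 2 ^ i) - a (g x * 2 ^ i)‖₊ : ℝ≥0∞) ^ (2:ℝ) := by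
      intro x hx
      obtain ⟨hx1, hlo, hhi, _⟩ := P x hx
      have e : (g x + 1) * 2^i = g x * 2^i + 2^i := by ring
      show (‖a (hi x.1 x.2 i) - a (lo x.1 x.2 i)‖₊ : ℝ≥0∞) ^ (2:ℝ) = _
      rw [hhi, hlo, e]
    have himg : (A.filter (fun x => F x ≠ 0)).image g ⊆ range (2^(s-i)) := by
      intro u hu
      obtain ⟨x, hx, rfl⟩ := Finset.mem_image.1 hu
      obtain ⟨hx1, hlo, hhi, htlo, hhit, _⟩ := P x hx
      have hle := (hJle x.1 hx1).2
      have hle2 : (g x + 1) * 2^i ≤ 2^(s-i) * 2^i := by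
        have e : (g x + 1) * 2^i = g x * 2^i + 2^i := by ring
        rw [e, ← hsplit]
        omega
      exact Finset.mem_range.2 (by
        have := Nat.le_of_mul_le_mul_right hle2 hpow
        omega)
    calc ∑ j ∈ range J, ((‖a (hi j true i) - a (lo j true i)‖₊ : ℝ≥0∞) ^ (2:ℝ)
          + (‖a (hi j false i) - a (lo j false i)‖₊ : ℝ≥0∞) ^ (2:ℝ))
        = ∑ x ∈ A, F x := by
          rw [hA, Finset.sum_product]
          refine Finset.sum_congr rfl fun j _ => ?_
          rw [Fintype.sum_bool]
      _ = ∑ x ∈ A.filter (fun x => F x ≠ 0), F x := (Finset.sum_filter_ne_zero A).symm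
      _ = ∑ x ∈ A.filter (fun x => F x ≠ 0),
            (‖a ((g x + 1) * 2 ^ i) - a (g x * 2 ^ i)‖₊ : ℝ≥0∞) ^ (2:ℝ) :=
          Finset.sum_congr rfl hvals
      _ = ∑ u ∈ (A.filter (fun x => F x ≠ 0)).image g,
            (‖a ((u + 1) * 2 ^ i) - a (u * 2 ^ i)‖₊ : ℝ≥0∞) ^ (2:ℝ) :=
          by rw [Finset.sum_image hinj]
      _ ≤ _ := Finset.sum_le_sum_of_subset himg
  -- main chain
  set f : ℕ → ℕ → ℝ≥0∞ := fun i j =>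
    (‖a (hi j true i) - a (lo j true i)‖₊ : ℝ≥0∞)
      + (‖a (hi j false i) - a (lo j false i)‖₊ : ℝ≥0∞) with hfdef
  calc (∑ j ∈ range J, (‖a (t (j+1)) - a (t j)‖₊ : ℝ≥0∞) ^ r) ^ (1/r)
      ≤ (∑ j ∈ range J, (‖a (t (j+1)) - a (t j)‖₊ : ℝ≥0∞) ^ (2:ℝ)) ^ (1/(2:ℝ)) :=
        RM.lp_mono _ _ hr
    _ ≤ (∑ j ∈ range J, (∑ i ∈ range (s+1), f i j) ^ (2:ℝ)) ^ (1/(2:ℝ)) := by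
        refine ENNReal.rpow_le_rpow (Finset.sum_le_sum fun j hj => ?_) (by norm_num)
        refine ENNReal.rpow_le_rpow ?_ (by norm_num)
        obtain ⟨h_t, h_le⟩ := hJle j (Finset.mem_range.1 hj)
        rw [(H j h_t h_le).1]
        calc (‖∑ i ∈ range (s+1), ((a (hi j true i) - a (lo j true i))
                + (a (hi j false i) - a (lo j false i)))‖₊ : ℝ≥0∞)
            ≤ ∑ i ∈ range (s+1), (‖(a (hi j true i) - a (lo j true i))
                + (a (hi j false i) - a (lo j false i))‖₊ : ℝ≥0∞) := by
              rw [← ENNReal.coe_finset_sum]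
              exact_mod_cast nnnorm_sum_le _ _
          _ ≤ ∑ i ∈ range (s+1), f i j := Finset.sum_le_sum fun i _ => by
              show _ ≤ (‖a (hi j true i) - a (lo j true i)‖₊ : ℝ≥0∞)
                + (‖a (hi j false i) - a (lo j false i)‖₊ : ℝ≥0∞)
              exact_mod_cast nnnorm_add_le _ _
    _ ≤ ∑ i ∈ range (s+1), (∑ j ∈ range J, f i j ^ (2:ℝ)) ^ (1/(2:ℝ)) :=
        RM.minkowski _ _ _
    _ ≤ ∑ i ∈ range (s+1), ((2:ℝ≥0∞) * ∑ u ∈ range (2^(s-i)),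
          (‖a ((u + 1) * 2 ^ i) - a (u * 2 ^ i)‖₊ : ℝ≥0∞) ^ (2:ℝ)) ^ (1/(2:ℝ)) := by
        refine Finset.sum_le_sum fun i hi' => ?_
        refine ENNReal.rpow_le_rpow ?_ (by norm_num)
        calc ∑ j ∈ range J, f i j ^ (2:ℝ)
            ≤ ∑ j ∈ range J, 2 * ((‖a (hi j true i) - a (lo j true i)‖₊ : ℝ≥0∞) ^ (2:ℝ)
                + (‖a (hi j false i) - a (lo j false i)‖₊ : ℝ≥0∞) ^ (2:ℝ)) :=
              Finset.sum_le_sum fun j _ => RM.sq_add_le _ _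
          _ = 2 * ∑ j ∈ range J, ((‖a (hi j true i) - a (lo j true i)‖₊ : ℝ≥0∞) ^ (2:ℝ)
                + (‖a (hi j false i) - a (lo j false i)‖₊ : ℝ≥0∞) ^ (2:ℝ)) := by
              rw [Finset.mul_sum]
          _ ≤ _ := mul_le_mul_right (counting i (by
              have := Finset.mem_range.1 hi'; omega)) 2
    _ = ENNReal.ofReal (Real.sqrt 2) * ∑ i ∈ range (s+1), (∑ u ∈ range (2^(s-i)),
          (‖a ((u + 1) * 2 ^ i) - a (u * 2 ^ i)‖₊ : ℝ≥0∞) ^ (2:ℝ)) ^ (1/(2:ℝ)) := by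
        rw [Finset.mul_sum]
        refine Finset.sum_congr rfl fun i _ => ?_
        rw [ENNReal.mul_rpow_of_nonneg _ _ (by norm_num : (0:ℝ) ≤ 1/2)]
        congr 1
        rw [Real.sqrt_eq_rpow, ← ENNReal.ofReal_rpow_of_pos (by norm_num)]
        norm_num
end

section
/- Let $1 \le r \le p < \infty$ and let $u, v \in \mathbb{N}$ with $v - u \ge 2$. If $\{f_j : j \in \mathbb{N}\}$ is a sequence of functions in $\ell^p(\mathbb{Z}^n)$, then $\big\| \|(f_j(x))_{j \in [u,v]}\|_{V^r} \big\|_{\ell^p(x \in \mathbb{Z}^n)} \le C \max\{U_p, (v-u)^{1/r} U_p^{1-1/r} V_p^{1/r}\}$, where $U_p := \max_{u \le j \le v} \|f_j\|_{\ell^p(\mathbb{Z}^n)}$, $V_p := \max_{u \le j < v} \|f_{j+1} - f_j\|_{\ell^p(\mathbb{Z}^n)}$, and $C$ depends only on $r$. -/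
open scoped ENNReal

/-- The `ℓ^p(ℤ^n)` norm of an `ℝ≥0∞`-valued quantity on the lattice. -/
noncomputable def lpNorm (n : ℕ) (p : ℝ) (F : (Fin n → ℤ) → ℝ≥0∞) : ℝ≥0∞ :=
  (∑' x : Fin n → ℤ, F x ^ p) ^ (1 / p)

namespace Stmt5Aux


theorem sum_rpow_le_rpow_sum {ι : Type*} (s : Finset ι) (c : ι → ℝ≥0∞) {r : ℝ} (hr : 1 ≤ r) :
    ∑ k ∈ s, c k ^ r ≤ (∑ k ∈ s, c k) ^ r := by
  have hr0 : 0 < r := lt_of_lt_of_le zero_lt_one hr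
  induction s using Finset.cons_induction with
  | empty => simp [ENNReal.zero_rpow_of_pos hr0]
  | cons a s ha ih =>
    rw [Finset.sum_cons, Finset.sum_cons]
    calc c a ^ r + ∑ k ∈ s, c k ^ r ≤ c a ^ r + (∑ k ∈ s, c k) ^ r := by gcongr
    _ ≤ (c a + ∑ k ∈ s, c k) ^ r := ENNReal.add_rpow_le_rpow_add _ _ hr

theorem telescope (a : ℕ → ℂ) {s q : ℕ} (h : s ≤ q) :
    (‖a q - a s‖₊ : ℝ≥0∞) ≤ ∑ j ∈ Finset.Ico s q, (‖a (j + 1) - a j‖₊ : ℝ≥0∞) := by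
  induction q, h using Nat.le_induction with
  | base => simp
  | succ q hsq ih =>
    rw [Finset.sum_Ico_succ_top (by omega)]
    have h3 : ‖a (q + 1) - a s‖₊ ≤ ‖a q - a s‖₊ + ‖a (q + 1) - a q‖₊ := by
      simpa [sub_add_sub_cancel'] using nnnorm_add_le (a q - a s) (a (q + 1) - a q)
    calc (‖a (q + 1) - a s‖₊ : ℝ≥0∞) ≤ (‖a q - a s‖₊ : ℝ≥0∞) + (‖a (q + 1) - a q‖₊ : ℝ≥0∞) := by
          rw [← ENNReal.coe_add]; exact_mod_cast h3
    _ ≤ _ := by gcongr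

theorem add_rpow_le (x y : ℝ≥0∞) {r : ℝ} (hr : 1 ≤ r) :
    (x + y) ^ r ≤ 2 ^ r * (x ^ r + y ^ r) := by
  refine (ENNReal.rpow_add_le_mul_rpow_add_rpow x y hr).trans ?_
  exact mul_le_mul_left (ENNReal.rpow_le_rpow_of_exponent_le (by norm_num) (by linarith)) _

/-- `ℓ^q` norm of an `ℝ≥0∞`-valued function via tsum. -/
noncomputable def lq {X : Type*} (q : ℝ) (G : X → ℝ≥0∞) : ℝ≥0∞ := (∑' x, G x ^ q) ^ (1 / q)

theorem lq_mono {X : Type*} {q : ℝ} (hq : 0 ≤ q) {G H : X → ℝ≥0∞} (h : ∀ x, G x ≤ H x) :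
    lq q G ≤ lq q H := by
  unfold lq
  refine ENNReal.rpow_le_rpow ?_ (by positivity)
  exact ENNReal.tsum_le_tsum fun x => ENNReal.rpow_le_rpow (h x) hq

theorem lq_add_le {X : Type*} {q : ℝ} (hq : 1 ≤ q) (G H : X → ℝ≥0∞) :
    lq q (fun x => G x + H x) ≤ lq q G + lq q H := by
  have hq0 : 0 < q := lt_of_lt_of_le zero_lt_one hq
  unfold lq
  rw [one_div q, ENNReal.rpow_inv_le_iff hq0, ← one_div q, ENNReal.tsum_eq_iSup_sum]
  refine iSup_le fun s => ?_
  have h1 := ENNReal.Lp_add_le s G H hq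
  calc ∑ i ∈ s, (G i + H i) ^ q
      = ((∑ i ∈ s, (G i + H i) ^ q) ^ (1 / q)) ^ q := by
        rw [← ENNReal.rpow_mul, one_div_mul_cancel hq0.ne', ENNReal.rpow_one]
    _ ≤ ((∑ i ∈ s, G i ^ q) ^ (1 / q) + (∑ i ∈ s, H i ^ q) ^ (1 / q)) ^ q :=
        ENNReal.rpow_le_rpow h1 hq0.le
    _ ≤ ((∑' i, G i ^ q) ^ (1 / q) + (∑' i, H i ^ q) ^ (1 / q)) ^ q := by
        gcongr <;> exact ENNReal.sum_le_tsum s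

theorem lq_sum_le {X ι : Type*} {q : ℝ} (hq : 1 ≤ q) (s : Finset ι) (G : ι → X → ℝ≥0∞) :
    lq q (fun x => ∑ i ∈ s, G i x) ≤ ∑ i ∈ s, lq q (G i) := by
  have hq0 : 0 < q := lt_of_lt_of_le zero_lt_one hq
  induction s using Finset.cons_induction with
  | empty =>
    simp only [Finset.sum_empty, lq, ENNReal.zero_rpow_of_pos hq0, tsum_zero,
      ENNReal.zero_rpow_of_pos (one_div_pos.mpr hq0), le_refl]
  | cons a s ha ih =>
    simp only [Finset.sum_cons]
    exact (lq_add_le hq _ _).trans (by gcongr)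

theorem lq_const_mul {X : Type*} {q : ℝ} (hq : 0 < q) (c : ℝ≥0∞) (G : X → ℝ≥0∞) :
    lq q (fun x => c * G x) = c * lq q G := by
  unfold lq
  simp only [ENNReal.mul_rpow_of_nonneg _ _ hq.le, ENNReal.tsum_mul_left,
    ENNReal.mul_rpow_of_nonneg _ _ (by positivity : (0:ℝ) ≤ 1/q), ← ENNReal.rpow_mul,
    mul_one_div_cancel hq.ne', ENNReal.rpow_one]

theorem sum_comp_le_of_strictMonoOn {s : Finset ℕ} {φ : ℕ → ℕ} {M : ℕ}
    (h1 : ∀ k ∈ s, φ k ≤ M) (h2 : ∀ k ∈ s, ∀ k' ∈ s, k < k' → φ k < φ k') (g : ℕ → ℝ≥0∞) :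
    ∑ k ∈ s, g (φ k) ≤ ∑ i ∈ Finset.range (M + 1), g i := by
  have hinj : ∀ x ∈ s, ∀ y ∈ s, φ x = φ y → x = y := by
    intro x hx y hy hxy
    rcases lt_trichotomy x y with h | h | h
    · exact absurd hxy (h2 x hx y hy h).ne
    · exact h
    · exact absurd hxy.symm (h2 y hy x hx h).ne
  rw [← Finset.sum_image hinj]
  refine Finset.sum_le_sum_of_subset ?_
  intro i hi
  simp only [Finset.mem_image] at hi
  obtain ⟨k, hk, rfl⟩ := hi
  exact Finset.mem_range.mpr (Nat.lt_succ_of_le (h1 k hk))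

theorem pointwise_bound {r : ℝ} (hr : 1 ≤ r) (u v L m : ℕ) (hL : 1 ≤ L) (huv : u ≤ v)
    (hm : v - u ≤ m * L) (a : ℕ → ℂ) (b : ℕ → ℕ) (hb : ∀ i, b i = u + min (i * L) (v - u)) :
    variationSeminorm r (Set.Icc u v) a ≤
      12 * (∑ i ∈ Finset.range (m + 1),
        ((∑ j ∈ Finset.Ico (b i) (b (i + 1)), (‖a (j + 1) - a j‖₊ : ℝ≥0∞)) ^ r
          + (‖a (b i)‖₊ : ℝ≥0∞) ^ r)) ^ (1 / r) := by
  classical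
  have hr0 : 0 < r := lt_of_lt_of_le zero_lt_one hr
  set T := ∑ i ∈ Finset.range (m + 1),
      ((∑ j ∈ Finset.Ico (b i) (b (i + 1)), (‖a (j + 1) - a j‖₊ : ℝ≥0∞)) ^ r
        + (‖a (b i)‖₊ : ℝ≥0∞) ^ r) with hT
  -- basic facts about the blocks
  have hbu : ∀ i, u ≤ b i := fun i => by rw [hb]; omega
  have hbv : ∀ i, b i ≤ v := fun i => by
    rw [hb]; have := min_le_right (i * L) (v - u); omega
  have hbm : ∀ {i i'}, i ≤ i' → b i ≤ b i' := fun {i i'} h => by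
    rw [hb, hb]
    have : min (i * L) (v - u) ≤ min (i' * L) (v - u) :=
      min_le_min (Nat.mul_le_mul_right L h) le_rfl
    omega
  have hblk_le : ∀ s, s ≤ v → (s - u) / L ≤ m := by
    intro s hs
    have h1 : s - u ≤ m * L := le_trans (by omega) hm
    calc (s - u) / L ≤ m * L / L := Nat.div_le_div_right h1
      _ = m := Nat.mul_div_cancel m (by omega)
  have hble : ∀ s, u ≤ s → s ≤ v → b ((s - u) / L) ≤ s := by
    intro s h1 h2
    rw [hb]
    have h3 : (s - u) / L * L ≤ s - u := Nat.div_mul_le_self _ _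
    have h4 : min ((s - u) / L * L) (v - u) ≤ s - u := le_trans (min_le_left _ _) h3
    omega
  have hbge : ∀ s, u ≤ s → s ≤ v → s ≤ b ((s - u) / L + 1) := by
    intro s h1 h2
    rw [hb]
    have h3 : s - u < ((s - u) / L + 1) * L :=
      (Nat.div_lt_iff_lt_mul (show 0 < L by omega)).mp (Nat.lt_succ_self _)
    have h4 : s - u ≤ min (((s - u) / L + 1) * L) (v - u) := le_min (by omega) (by omega)
    omega
  have hblk_mono : ∀ {s s'}, s ≤ s' → (s - u) / L ≤ (s' - u) / L := fun {s s'} h =>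
    Nat.div_le_div_right (by omega)
  -- norm of a point controlled by block data
  have hQle : ∀ s, u ≤ s → s ≤ v →
      (‖a s‖₊ : ℝ≥0∞) ≤ (‖a (b ((s - u) / L))‖₊ : ℝ≥0∞) +
        ∑ j ∈ Finset.Ico (b ((s - u) / L)) (b ((s - u) / L + 1)), (‖a (j + 1) - a j‖₊ : ℝ≥0∞) := by
    intro s h1 h2
    have h3 : ‖a s‖₊ ≤ ‖a (b ((s - u) / L))‖₊ + ‖a s - a (b ((s - u) / L))‖₊ := by
      have := nnnorm_add_le (a (b ((s - u) / L))) (a s - a (b ((s - u) / L)))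
      simpa [add_sub_cancel] using this
    calc (‖a s‖₊ : ℝ≥0∞) ≤ (‖a (b ((s - u) / L))‖₊ : ℝ≥0∞) + (‖a s - a (b ((s - u) / L))‖₊ : ℝ≥0∞) := by
          rw [← ENNReal.coe_add]; exact_mod_cast h3
      _ ≤ _ := by
          gcongr
          refine (telescope a (hble s h1 h2)).trans ?_
          exact Finset.sum_le_sum_of_subset (Finset.Ico_subset_Ico le_rfl (hbge s h1 h2))
  have hQr : ∀ s, u ≤ s → s ≤ v → (‖a s‖₊ : ℝ≥0∞) ^ r ≤ 2 ^ r *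
      ((∑ j ∈ Finset.Ico (b ((s - u) / L)) (b ((s - u) / L + 1)), (‖a (j + 1) - a j‖₊ : ℝ≥0∞)) ^ r
        + (‖a (b ((s - u) / L))‖₊ : ℝ≥0∞) ^ r) := by
    intro s h1 h2
    calc (‖a s‖₊ : ℝ≥0∞) ^ r ≤ ((‖a (b ((s - u) / L))‖₊ : ℝ≥0∞) +
          ∑ j ∈ Finset.Ico (b ((s - u) / L)) (b ((s - u) / L + 1)),
            (‖a (j + 1) - a j‖₊ : ℝ≥0∞)) ^ r := ENNReal.rpow_le_rpow (hQle s h1 h2) hr0.le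
      _ ≤ 2 ^ r * ((‖a (b ((s - u) / L))‖₊ : ℝ≥0∞) ^ r +
            (∑ j ∈ Finset.Ico (b ((s - u) / L)) (b ((s - u) / L + 1)),
              (‖a (j + 1) - a j‖₊ : ℝ≥0∞)) ^ r) := add_rpow_le _ _ hr
      _ = _ := by ring
  -- main estimate for a fixed partition
  suffices H : ∀ (J : ℕ) (t : ℕ → ℕ), StrictMonoOn t (Set.Iic J) → (∀ j ≤ J, t j ∈ Set.Icc u v) →
      ∑ k ∈ Finset.range J, (‖a (t (k + 1)) - a (t k)‖₊ : ℝ≥0∞) ^ r ≤ 12 ^ r * T by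
    rw [variationSeminorm]
    refine iSup_le fun J => iSup_le fun t => iSup_le fun ht => iSup_le fun htI => ?_
    calc (∑ k ∈ Finset.range J, (‖a (t (k + 1)) - a (t k)‖₊ : ℝ≥0∞) ^ r) ^ (1 / r)
        ≤ (12 ^ r * T) ^ (1 / r) := ENNReal.rpow_le_rpow (H J t ht htI) (by positivity)
      _ = 12 * T ^ (1 / r) := by
          rw [ENNReal.mul_rpow_of_nonneg _ _ (by positivity), ← ENNReal.rpow_mul,
            mul_one_div_cancel hr0.ne', ENNReal.rpow_one]
  intro J t ht htI
  have hmem : ∀ k, k ≤ J → u ≤ t k ∧ t k ≤ v := fun k hk => Set.mem_Icc.mp (htI k hk)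
  have htm : ∀ {k k'}, k ≤ k' → k' ≤ J → t k ≤ t k' := fun {k k'} h h' =>
    (ht.monotoneOn) (Set.mem_Iic.mpr (le_trans h h')) (Set.mem_Iic.mpr h') h
  have hts : ∀ k, k < J → t k < t (k + 1) := fun k hk =>
    ht (Set.mem_Iic.mpr (by omega)) (Set.mem_Iic.mpr (by omega)) (by omega)
  rw [← Finset.sum_filter_add_sum_filter_not (Finset.range J)
    (fun k => (t k - u) / L = (t (k + 1) - u) / L)]
  have short_le : ∑ k ∈ (Finset.range J).filter (fun k => (t k - u) / L = (t (k + 1) - u) / L),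
      (‖a (t (k + 1)) - a (t k)‖₊ : ℝ≥0∞) ^ r ≤ T := by
    rw [← Finset.sum_fiberwise_of_maps_to (g := fun k => (t k - u) / L)
      (t := Finset.range (m + 1)) (fun k hk => by
        simp only [Finset.mem_filter, Finset.mem_range] at hk ⊢
        exact Nat.lt_succ_of_le (hblk_le _ (hmem k (le_of_lt hk.1)).2))]
    rw [hT]
    refine Finset.sum_le_sum fun i _ => ?_
    refine le_trans ?_ (self_le_add_right _ _)
    refine le_trans (sum_rpow_le_rpow_sum _ _ hr) (ENNReal.rpow_le_rpow ?_ hr0.le)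
    have hdisj0 : ∀ k k', k < J → k' < J → k < k' →
        Disjoint (Finset.Ico (t k) (t (k + 1))) (Finset.Ico (t k') (t (k' + 1))) := by
      intro k k' h h' hlt
      have h5 : t (k + 1) ≤ t k' := htm (by omega) (by omega)
      rw [Finset.disjoint_left]
      intro j hj hj'
      simp only [Finset.mem_Ico] at hj hj'
      omega
    set s' := ((Finset.range J).filter (fun k => (t k - u) / L = (t (k + 1) - u) / L)).filter
      (fun k => (t k - u) / L = i) with hs'
    have hs'mem : ∀ k ∈ s', k < J ∧ (t k - u) / L = i ∧ (t (k + 1) - u) / L = i := by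
      intro k hk
      simp only [hs', Finset.mem_filter, Finset.mem_range] at hk
      exact ⟨hk.1.1, hk.2, by omega⟩
    calc ∑ k ∈ s', (‖a (t (k + 1)) - a (t k)‖₊ : ℝ≥0∞)
        ≤ ∑ k ∈ s', ∑ j ∈ Finset.Ico (t k) (t (k + 1)), (‖a (j + 1) - a j‖₊ : ℝ≥0∞) :=
          Finset.sum_le_sum fun k hk => telescope a (le_of_lt (hts k (hs'mem k hk).1))
      _ = ∑ j ∈ s'.biUnion (fun k => Finset.Ico (t k) (t (k + 1))), (‖a (j + 1) - a j‖₊ : ℝ≥0∞) := by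
          refine (Finset.sum_biUnion ?_).symm
          intro k hk k' hk' hne
          rcases lt_or_gt_of_ne hne with h | h
          · exact hdisj0 k k' (hs'mem k hk).1 (hs'mem k' hk').1 h
          · exact (hdisj0 k' k (hs'mem k' hk').1 (hs'mem k hk).1 h).symm
      _ ≤ ∑ j ∈ Finset.Ico (b i) (b (i + 1)), (‖a (j + 1) - a j‖₊ : ℝ≥0∞) := by
          refine Finset.sum_le_sum_of_subset ?_
          intro j hj
          rw [Finset.mem_biUnion] at hj
          obtain ⟨k, hk, hjk⟩ := hj
          obtain ⟨hkJ, hk1, hk2⟩ := hs'mem k hk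
          rw [Finset.mem_Ico] at hjk ⊢
          have hmk := hmem k (by omega)
          have hmk1 := hmem (k + 1) (by omega)
          constructor
          · calc b i = b ((t k - u) / L) := by rw [hk1]
              _ ≤ t k := hble _ hmk.1 hmk.2
              _ ≤ j := hjk.1
          · calc j < t (k + 1) := hjk.2
              _ ≤ b ((t (k + 1) - u) / L + 1) := hbge _ hmk1.1 hmk1.2
              _ = b (i + 1) := by rw [hk2]
  have long_le : ∑ k ∈ (Finset.range J).filter (fun k => ¬((t k - u) / L = (t (k + 1) - u) / L)),
      (‖a (t (k + 1)) - a (t k)‖₊ : ℝ≥0∞) ^ r ≤ 4 ^ r * (T + T) := by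
    set s' := (Finset.range J).filter (fun k => ¬((t k - u) / L = (t (k + 1) - u) / L)) with hs'
    have hs'mem : ∀ k ∈ s', k < J ∧ (t k - u) / L ≠ (t (k + 1) - u) / L := by
      intro k hk
      simp only [hs', Finset.mem_filter, Finset.mem_range] at hk
      exact ⟨hk.1, hk.2⟩
    set G : ℕ → ℝ≥0∞ := fun i =>
      (∑ j ∈ Finset.Ico (b i) (b (i + 1)), (‖a (j + 1) - a j‖₊ : ℝ≥0∞)) ^ r
        + (‖a (b i)‖₊ : ℝ≥0∞) ^ r with hG
    have hTG : T = ∑ i ∈ Finset.range (m + 1), G i := by rw [hT]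
    have hDelta : ∀ k, k < J → (‖a (t (k + 1)) - a (t k)‖₊ : ℝ≥0∞) ^ r ≤
        4 ^ r * (G ((t k - u) / L) + G ((t (k + 1) - u) / L)) := by
      intro k hk
      have hmk := hmem k (by omega)
      have hmk1 := hmem (k + 1) (by omega)
      have h1 : (‖a (t (k + 1)) - a (t k)‖₊ : ℝ≥0∞) ≤
          (‖a (t (k + 1))‖₊ : ℝ≥0∞) + (‖a (t k)‖₊ : ℝ≥0∞) := by
        rw [← ENNReal.coe_add]; exact_mod_cast nnnorm_sub_le _ _
      calc (‖a (t (k + 1)) - a (t k)‖₊ : ℝ≥0∞) ^ r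
          ≤ ((‖a (t (k + 1))‖₊ : ℝ≥0∞) + (‖a (t k)‖₊ : ℝ≥0∞)) ^ r :=
            ENNReal.rpow_le_rpow h1 hr0.le
        _ ≤ 2 ^ r * ((‖a (t (k + 1))‖₊ : ℝ≥0∞) ^ r + (‖a (t k)‖₊ : ℝ≥0∞) ^ r) :=
            add_rpow_le _ _ hr
        _ ≤ 2 ^ r * (2 ^ r * G ((t (k + 1) - u) / L) + 2 ^ r * G ((t k - u) / L)) := by
            gcongr
            · exact le_trans (hQr _ hmk1.1 hmk1.2) (by rw [hG])
            · exact le_trans (hQr _ hmk.1 hmk.2) (by rw [hG])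
        _ = (2 ^ r * 2 ^ r) * (G ((t k - u) / L) + G ((t (k + 1) - u) / L)) := by ring
        _ = 4 ^ r * (G ((t k - u) / L) + G ((t (k + 1) - u) / L)) := by
            rw [← ENNReal.mul_rpow_of_nonneg _ _ hr0.le]; norm_num
    calc ∑ k ∈ s', (‖a (t (k + 1)) - a (t k)‖₊ : ℝ≥0∞) ^ r
        ≤ ∑ k ∈ s', 4 ^ r * (G ((t k - u) / L) + G ((t (k + 1) - u) / L)) :=
          Finset.sum_le_sum fun k hk => hDelta k (hs'mem k hk).1
      _ = 4 ^ r * (∑ k ∈ s', G ((t k - u) / L) + ∑ k ∈ s', G ((t (k + 1) - u) / L)) := by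
          rw [← Finset.mul_sum, ← Finset.sum_add_distrib]
      _ ≤ 4 ^ r * (T + T) := by
          gcongr
          · rw [hTG]
            refine sum_comp_le_of_strictMonoOn (fun k hk => hblk_le _ (hmem k (by
                have := (hs'mem k hk).1; omega)).2) ?_ G
            intro k hk k' hk' hlt
            obtain ⟨hkJ, hkne⟩ := hs'mem k hk
            obtain ⟨hk'J, _⟩ := hs'mem k' hk'
            have e1 : (t k - u) / L ≤ (t (k + 1) - u) / L := hblk_mono (le_of_lt (hts k hkJ))
            have e2 : (t (k + 1) - u) / L ≤ (t k' - u) / L := hblk_mono (htm (by omega) (by omega))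
            omega
          · rw [hTG]
            refine sum_comp_le_of_strictMonoOn (fun k hk => hblk_le _ (hmem (k + 1) (by
                have := (hs'mem k hk).1; omega)).2) ?_ G
            intro k hk k' hk' hlt
            obtain ⟨hkJ, _⟩ := hs'mem k hk
            obtain ⟨hk'J, hk'ne⟩ := hs'mem k' hk'
            have e1 : (t (k + 1) - u) / L ≤ (t k' - u) / L := hblk_mono (htm (by omega) (by omega))
            have e2 : (t k' - u) / L ≤ (t (k' + 1) - u) / L := hblk_mono (le_of_lt (hts k' hk'J))
            omega
  calc _ ≤ T + 4 ^ r * (T + T) := add_le_add short_le long_le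
    _ = (1 + 2 * 4 ^ r) * T := by ring
    _ ≤ 12 ^ r * T := by
        gcongr ?_ * T
        have h4 : (1 : ℝ≥0∞) ≤ 4 ^ r := by
          calc (1 : ℝ≥0∞) = 1 ^ r := (ENNReal.one_rpow r).symm
            _ ≤ 4 ^ r := ENNReal.rpow_le_rpow (by norm_num) hr0.le
        have h3 : (3 : ℝ≥0∞) ≤ 3 ^ r := by
          nth_rw 1 [← ENNReal.rpow_one 3]
          exact ENNReal.rpow_le_rpow_of_exponent_le (by norm_num) hr
        calc (1 : ℝ≥0∞) + 2 * 4 ^ r ≤ 4 ^ r + 2 * 4 ^ r := by gcongr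
          _ = 3 * 4 ^ r := by ring
          _ ≤ 3 ^ r * 4 ^ r := by gcongr
          _ = 12 ^ r := by rw [← ENNReal.mul_rpow_of_nonneg _ _ hr0.le]; norm_num



theorem lq_rpow {X : Type*} {p r : ℝ} (hp0 : 0 < p) (hr0 : 0 < r) (G : X → ℝ≥0∞) :
    lq (p / r) (fun x => G x ^ r) = (lq p G) ^ r := by
  unfold lq
  rw [← ENNReal.rpow_mul]
  congr 1
  · refine tsum_congr fun x => ?_
    rw [← ENNReal.rpow_mul]
    congr 1
    field_simp
  · rw [one_div_div]
    ring

theorem lq_rpow_inv {X : Type*} {p r : ℝ} (hp0 : 0 < p) (hr0 : 0 < r) (G : X → ℝ≥0∞) :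
    lq p (fun x => G x ^ (1 / r)) = (lq (p / r) G) ^ (1 / r) := by
  unfold lq
  rw [← ENNReal.rpow_mul]
  congr 1
  · refine tsum_congr fun x => ?_
    rw [← ENNReal.rpow_mul]
    congr 1
    ring
  · rw [one_div_div]
    field_simp

end Stmt5Aux

/-- For `1 ≤ r ≤ p < ∞` and `v - u ≥ 2`, the `ℓ^p(ℤ^n)` norm of the pointwise `r`-variation of
`(f_j)_{j∈[u,v]}` is bounded by `C max{U_p, (v-u)^{1/r} U_p^{1-1/r} V_p^{1/r}}`, where
`U_p = max_{u≤j≤v} ‖f_j‖_{ℓ^p}`, `V_p = max_{u≤j<v} ‖f_{j+1}-f_j‖_{ℓ^p}`, and `C = C(r)`. -/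
theorem statement5 (r : ℝ) (hr : 1 ≤ r) :
    ∃ C : ℝ≥0∞, 0 < C ∧ C ≠ ⊤ ∧
      ∀ (n : ℕ) (p : ℝ), r ≤ p → ∀ (u v : ℕ), u + 2 ≤ v →
        ∀ f : ℕ → (Fin n → ℤ) → ℂ,
          lpNorm n p (fun x => variationSeminorm r (Set.Icc u v) (fun j => f j x)) ≤
            C * max (⨆ j ∈ Set.Icc u v, lpNorm n p (fun x => (‖f j x‖₊ : ℝ≥0∞)))
              (((v - u : ℕ) : ℝ≥0∞) ^ (1 / r) *
                (⨆ j ∈ Set.Icc u v, lpNorm n p (fun x => (‖f j x‖₊ : ℝ≥0∞))) ^ (1 - 1 / r) *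
                (⨆ j ∈ Set.Ico u v,
                    lpNorm n p (fun x => (‖f (j + 1) x - f j x‖₊ : ℝ≥0∞))) ^ (1 / r)) := by
  classical
  have hr0 : 0 < r := lt_of_lt_of_le zero_lt_one hr
  set K : ℝ≥0∞ := 2 ^ (r - 1) * 4 + 4 with hK
  have hKtop : K ≠ ⊤ := by
    rw [hK]
    exact ENNReal.add_ne_top.mpr
      ⟨ENNReal.mul_ne_top (ENNReal.rpow_ne_top_of_nonneg (by linarith) (by norm_num))
        (by norm_num), by norm_num⟩
  have h12top : (12 : ℝ≥0∞) ^ r ≠ ⊤ := ENNReal.rpow_ne_top_of_nonneg hr0.le (by norm_num)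
  have h12pos : (0 : ℝ≥0∞) < 12 ^ r := ENNReal.rpow_pos (by norm_num) (by norm_num)
  have hKpos : (0 : ℝ≥0∞) < K := by
    rw [hK]
    exact lt_of_lt_of_le (by norm_num : (0:ℝ≥0∞) < 4) le_add_self
  refine ⟨((12 : ℝ≥0∞) ^ r * K) ^ (1 / r), ?_, ?_, ?_⟩
  · exact ENNReal.rpow_pos (ENNReal.mul_pos h12pos.ne' hKpos.ne') (ENNReal.mul_ne_top h12top hKtop)
  · exact ENNReal.rpow_ne_top_of_nonneg (one_div_nonneg.mpr hr0.le) (ENNReal.mul_ne_top h12top hKtop)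
  intro n p hp u v huv2 f
  have hp1 : 1 ≤ p := le_trans hr hp
  have hp0 : 0 < p := by linarith
  set N := v - u with hN
  set U := ⨆ j ∈ Set.Icc u v, lpNorm n p (fun x => (‖f j x‖₊ : ℝ≥0∞)) with hU
  set V := ⨆ j ∈ Set.Ico u v, lpNorm n p (fun x => (‖f (j + 1) x - f j x‖₊ : ℝ≥0∞)) with hV
  have hN2 : 2 ≤ N := by omega
  by_cases hV0 : V = 0
  · -- all increments vanish, LHS = 0
    have hfstep : ∀ j, u ≤ j → j < v → ∀ x, f (j + 1) x = f j x := by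
      intro j hj1 hj2 x
      have h1 : lpNorm n p (fun x => (‖f (j + 1) x - f j x‖₊ : ℝ≥0∞)) = 0 := by
        refine le_antisymm ?_ zero_le
        calc lpNorm n p (fun x => (‖f (j + 1) x - f j x‖₊ : ℝ≥0∞)) ≤ V := by
              rw [hV]
              exact le_iSup₂ (f := fun j (_ : j ∈ Set.Ico u v) =>
                lpNorm n p fun x => (‖f (j + 1) x - f j x‖₊ : ℝ≥0∞)) j (Set.mem_Ico.mpr ⟨hj1, hj2⟩)
          _ = 0 := hV0
      have h2 : (∑' y : Fin n → ℤ, (‖f (j + 1) y - f j y‖₊ : ℝ≥0∞) ^ p) = 0 := by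
        rw [lpNorm] at h1
        exact (ENNReal.rpow_eq_zero_iff_of_pos (one_div_pos.mpr hp0)).mp h1
      have h3 := ENNReal.tsum_eq_zero.mp h2 x
      have h4 : (‖f (j + 1) x - f j x‖₊ : ℝ≥0∞) = 0 :=
        (ENNReal.rpow_eq_zero_iff_of_pos hp0).mp h3
      have h5 : f (j + 1) x - f j x = 0 := by simpa using h4
      exact sub_eq_zero.mp h5
    have hkey : ∀ (x : Fin n → ℤ) (s s' : ℕ), u ≤ s → s ≤ s' → s' ≤ v → f s' x = f s x := by
      intro x s s' h1 h2 h3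
      induction s', h2 using Nat.le_induction with
      | base => rfl
      | succ s' h ih => rw [hfstep s' (by omega) (by omega) x, ih (by omega)]
    have hvar : ∀ x : Fin n → ℤ, variationSeminorm r (Set.Icc u v) (fun j => f j x) = 0 := by
      intro x
      refine le_antisymm ?_ zero_le
      rw [variationSeminorm]
      refine iSup_le fun J => iSup_le fun t => iSup_le fun ht => iSup_le fun htI => ?_
      have hz : ∀ k ∈ Finset.range J, ((‖f (t (k + 1)) x - f (t k) x‖₊ : ℝ≥0∞)) ^ r = 0 := by
        intro k hk
        rw [Finset.mem_range] at hk
        have h5 := Set.mem_Icc.mp (htI k (by omega))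
        have h6 := Set.mem_Icc.mp (htI (k + 1) (by omega))
        have h7 : t k ≤ t (k + 1) :=
          le_of_lt (ht (Set.mem_Iic.mpr (by omega)) (Set.mem_Iic.mpr (by omega)) (by omega))
        rw [hkey x (t k) (t (k + 1)) h5.1 h7 h6.2]
        simp [ENNReal.zero_rpow_of_pos hr0]
      rw [Finset.sum_eq_zero hz, ENNReal.zero_rpow_of_pos (one_div_pos.mpr hr0)]
    have LHS0 : lpNorm n p (fun x => variationSeminorm r (Set.Icc u v) (fun j => f j x)) = 0 := by
      rw [show (fun x => variationSeminorm r (Set.Icc u v) fun j => f j x)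
          = (fun _ : Fin n → ℤ => (0 : ℝ≥0∞)) from funext hvar, lpNorm]
      simp only [ENNReal.zero_rpow_of_pos hp0, tsum_zero,
        ENNReal.zero_rpow_of_pos (one_div_pos.mpr hp0)]
    rw [LHS0]
    exact zero_le
  by_cases hUtop : U = ⊤
  · have hmax : max U (((N : ℕ) : ℝ≥0∞) ^ (1 / r) * U ^ (1 - 1 / r) * V ^ (1 / r)) = ⊤ := by
      rw [hUtop]; simp
    rw [hmax, ENNReal.mul_top
      (ENNReal.rpow_pos (ENNReal.mul_pos h12pos.ne' hKpos.ne')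
        (ENNReal.mul_ne_top h12top hKtop)).ne']
    exact le_top
  -- main case
  have hV2U : V ≤ 2 * U := by
    rw [hV]
    refine iSup₂_le fun j hj => ?_
    obtain ⟨hj1, hj2⟩ := Set.mem_Ico.mp hj
    have h1 : lpNorm n p (fun x => (‖f (j + 1) x - f j x‖₊ : ℝ≥0∞)) ≤
        Stmt5Aux.lq p (fun x => (‖f (j + 1) x‖₊ : ℝ≥0∞) + (‖f j x‖₊ : ℝ≥0∞)) := by
      refine Stmt5Aux.lq_mono hp0.le fun x => ?_
      rw [← ENNReal.coe_add]
      exact_mod_cast nnnorm_sub_le _ _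
    refine h1.trans ((Stmt5Aux.lq_add_le hp1 _ _).trans ?_)
    have hUj : ∀ j', u ≤ j' → j' ≤ v → lpNorm n p (fun x => (‖f j' x‖₊ : ℝ≥0∞)) ≤ U := by
      intro j' h1' h2'
      rw [hU]
      exact le_iSup₂ (f := fun j' (_ : j' ∈ Set.Icc u v) =>
        lpNorm n p fun x => (‖f j' x‖₊ : ℝ≥0∞)) j' (Set.mem_Icc.mpr ⟨h1', h2'⟩)
    have h2 : lpNorm n p (fun x => (‖f (j + 1) x‖₊ : ℝ≥0∞)) ≤ U := hUj (j + 1) (by omega) (by omega)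
    have h3 : lpNorm n p (fun x => (‖f j x‖₊ : ℝ≥0∞)) ≤ U := hUj j (by omega) (by omega)
    calc Stmt5Aux.lq p (fun x => (‖f (j + 1) x‖₊ : ℝ≥0∞)) +
          Stmt5Aux.lq p (fun x => (‖f j x‖₊ : ℝ≥0∞)) ≤ U + U := add_le_add h2 h3
      _ = 2 * U := (two_mul U).symm
  have hU0 : U ≠ 0 := by
    intro h
    rw [h, mul_zero] at hV2U
    exact hV0 (le_antisymm hV2U zero_le)
  have hVtop : V ≠ ⊤ := by
    intro h
    rw [h] at hV2U
    exact (ENNReal.mul_ne_top (by norm_num) hUtop) (top_le_iff.mp hV2U)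
  set ρ : ℝ := (U / V).toReal with hρdef
  have hofρ : ENNReal.ofReal ρ = U / V :=
    ENNReal.ofReal_toReal (ENNReal.div_lt_top hUtop hV0).ne
  have hdm : U / V * V = U := ENNReal.div_mul_cancel hV0 hVtop
  set L := min N (max 1 ⌈ρ⌉₊) with hLdef
  have hL1 : 1 ≤ L := le_min (by omega) (le_max_left _ _)
  have hLN : L ≤ N := min_le_left _ _
  set m := (N - 1) / L + 1 with hmdef
  have hm1 : 1 ≤ m := by rw [hmdef]; exact Nat.le_add_left 1 _
  have hmL : N ≤ m * L := by
    have h1 := (Nat.div_lt_iff_lt_mul (show 0 < L by omega)).mp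
      (Nat.lt_succ_self ((N - 1) / L))
    rw [hmdef]
    exact le_trans (by omega) (Nat.succ_le_of_lt h1)
  have hmLle : m * L ≤ 2 * N := by
    have h1 : (N - 1) / L * L ≤ N - 1 := Nat.div_mul_le_self _ _
    have h2 : m * L = (N - 1) / L * L + L := by rw [hmdef]; ring
    omega
  have hUj : ∀ j', u ≤ j' → j' ≤ v → lpNorm n p (fun x => (‖f j' x‖₊ : ℝ≥0∞)) ≤ U := by
    intro j' h1' h2'
    rw [hU]
    exact le_iSup₂ (f := fun j' (_ : j' ∈ Set.Icc u v) =>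
      lpNorm n p fun x => (‖f j' x‖₊ : ℝ≥0∞)) j' (Set.mem_Icc.mpr ⟨h1', h2'⟩)
  set b : ℕ → ℕ := fun i => u + min (i * L) N with hb
  have hbi : ∀ i, b i = u + min (i * L) (v - u) := by
    intro i
    simp only [hb, hN]
  have hbu : ∀ i, u ≤ b i := fun i => by simp only [hb]; omega
  have hbv : ∀ i, b i ≤ v := fun i => by simp only [hb]; omega
  have hcard : ∀ i, (Finset.Ico (b i) (b (i + 1))).card ≤ L := by
    intro i
    rw [Nat.card_Ico]
    simp only [hb]
    have h1 : (i + 1) * L = i * L + L := by ring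
    omega
  have hpr1 : 1 ≤ p / r := (one_le_div hr0).mpr hp
  have hptw : ∀ x : Fin n → ℤ, variationSeminorm r (Set.Icc u v) (fun j => f j x) ≤
      12 * (∑ i ∈ Finset.range (m + 1),
        ((∑ j ∈ Finset.Ico (b i) (b (i + 1)), (‖f (j + 1) x - f j x‖₊ : ℝ≥0∞)) ^ r
          + (‖f (b i) x‖₊ : ℝ≥0∞) ^ r)) ^ (1 / r) := fun x =>
    Stmt5Aux.pointwise_bound hr u v L m hL1 (by omega) (by rw [← hN]; exact hmL)
      (fun j => f j x) b hbi
  have step1 : lpNorm n p (fun x => variationSeminorm r (Set.Icc u v) (fun j => f j x)) ≤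
      12 * Stmt5Aux.lq p (fun x => (∑ i ∈ Finset.range (m + 1),
        ((∑ j ∈ Finset.Ico (b i) (b (i + 1)), (‖f (j + 1) x - f j x‖₊ : ℝ≥0∞)) ^ r
          + (‖f (b i) x‖₊ : ℝ≥0∞) ^ r)) ^ (1 / r)) := by
    refine le_trans (Stmt5Aux.lq_mono hp0.le hptw) ?_
    exact le_of_eq (Stmt5Aux.lq_const_mul hp0 12 _)
  have step2 : Stmt5Aux.lq p (fun x => (∑ i ∈ Finset.range (m + 1),
        ((∑ j ∈ Finset.Ico (b i) (b (i + 1)), (‖f (j + 1) x - f j x‖₊ : ℝ≥0∞)) ^ r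
          + (‖f (b i) x‖₊ : ℝ≥0∞) ^ r)) ^ (1 / r))
      = (Stmt5Aux.lq (p / r) (fun x => ∑ i ∈ Finset.range (m + 1),
      ((∑ j ∈ Finset.Ico (b i) (b (i + 1)), (‖f (j + 1) x - f j x‖₊ : ℝ≥0∞)) ^ r
        + (‖f (b i) x‖₊ : ℝ≥0∞) ^ r))) ^ (1 / r) :=
    Stmt5Aux.lq_rpow_inv hp0 hr0 _
  have step3 : Stmt5Aux.lq (p / r) (fun x => ∑ i ∈ Finset.range (m + 1),
      ((∑ j ∈ Finset.Ico (b i) (b (i + 1)), (‖f (j + 1) x - f j x‖₊ : ℝ≥0∞)) ^ r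
        + (‖f (b i) x‖₊ : ℝ≥0∞) ^ r)) ≤
      ((m : ℝ≥0∞) + 1) * (((L : ℝ≥0∞) * V) ^ r + U ^ r) := by
    have hSi : ∀ i ∈ Finset.range (m + 1), Stmt5Aux.lq (X := Fin n → ℤ) (p / r)
        (fun x => (∑ j ∈ Finset.Ico (b i) (b (i + 1)), (‖f (j + 1) x - f j x‖₊ : ℝ≥0∞)) ^ r
          + (‖f (b i) x‖₊ : ℝ≥0∞) ^ r) ≤ ((L : ℝ≥0∞) * V) ^ r + U ^ r := by
      intro i _
      refine le_trans (Stmt5Aux.lq_add_le hpr1 _ _) (add_le_add ?_ ?_)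
      · rw [Stmt5Aux.lq_rpow hp0 hr0]
        refine ENNReal.rpow_le_rpow ?_ hr0.le
        calc Stmt5Aux.lq p
              (fun x => ∑ j ∈ Finset.Ico (b i) (b (i + 1)), (‖f (j + 1) x - f j x‖₊ : ℝ≥0∞))
            ≤ ∑ j ∈ Finset.Ico (b i) (b (i + 1)),
                Stmt5Aux.lq p (fun x => (‖f (j + 1) x - f j x‖₊ : ℝ≥0∞)) :=
              Stmt5Aux.lq_sum_le hp1 _ _
          _ ≤ ∑ j ∈ Finset.Ico (b i) (b (i + 1)), V := by
              refine Finset.sum_le_sum fun j hj => ?_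
              rw [Finset.mem_Ico] at hj
              have h1 : u ≤ j := le_trans (hbu i) hj.1
              have h2 : j < v := lt_of_lt_of_le hj.2 (hbv (i + 1))
              rw [hV]
              exact le_iSup₂ (f := fun j (_ : j ∈ Set.Ico u v) =>
                lpNorm n p fun x => (‖f (j + 1) x - f j x‖₊ : ℝ≥0∞)) j (Set.mem_Ico.mpr ⟨h1, h2⟩)
          _ = ((Finset.Ico (b i) (b (i + 1))).card : ℝ≥0∞) * V := by
              rw [Finset.sum_const, nsmul_eq_mul]
          _ ≤ (L : ℝ≥0∞) * V := mul_le_mul_left (by exact_mod_cast hcard i) V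
      · rw [Stmt5Aux.lq_rpow hp0 hr0]
        exact ENNReal.rpow_le_rpow (hUj (b i) (hbu i) (hbv i)) hr0.le
    calc Stmt5Aux.lq (p / r) (fun x => ∑ i ∈ Finset.range (m + 1),
      ((∑ j ∈ Finset.Ico (b i) (b (i + 1)), (‖f (j + 1) x - f j x‖₊ : ℝ≥0∞)) ^ r
        + (‖f (b i) x‖₊ : ℝ≥0∞) ^ r))
        ≤ ∑ i ∈ Finset.range (m + 1), (((L : ℝ≥0∞) * V) ^ r + U ^ r) :=
          le_trans (Stmt5Aux.lq_sum_le hpr1 _ _) (Finset.sum_le_sum hSi)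
      _ = ((m : ℝ≥0∞) + 1) * (((L : ℝ≥0∞) * V) ^ r + U ^ r) := by
          rw [Finset.sum_const, Finset.card_range, nsmul_eq_mul]
          push_cast
          ring
  have h2UV : ∀ w : ℝ≥0∞, w ≤ 2 * (U / V) → w * V ≤ 2 * U := by
    intro w hw
    calc w * V ≤ 2 * (U / V) * V := mul_le_mul_left hw V
      _ = 2 * U := by rw [mul_assoc, hdm]
  have harith : ((m : ℝ≥0∞) + 1) * (((L : ℝ≥0∞) * V) ^ r + U ^ r) ≤
      K * max (U ^ r) ((N : ℝ≥0∞) * U ^ (r - 1) * V) := by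
    by_cases hcase : max 1 ⌈ρ⌉₊ < N
    · have hLeq : L = max 1 ⌈ρ⌉₊ := min_eq_right hcase.le
      have hULV : U ≤ (L : ℝ≥0∞) * V := by
        have h1 : U / V ≤ (L : ℝ≥0∞) := by
          rw [← hofρ]
          calc ENNReal.ofReal ρ ≤ ENNReal.ofReal (⌈ρ⌉₊ : ℝ) :=
                ENNReal.ofReal_le_ofReal (Nat.le_ceil ρ)
            _ = ((⌈ρ⌉₊ : ℕ) : ℝ≥0∞) := ENNReal.ofReal_natCast _
            _ ≤ (L : ℝ≥0∞) := Nat.cast_le.mpr (by rw [hLeq]; exact le_max_right _ _)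
        calc U = U / V * V := hdm.symm
          _ ≤ (L : ℝ≥0∞) * V := mul_le_mul_left h1 V
      have hLV2U : (L : ℝ≥0∞) * V ≤ 2 * U := by
        rcases le_or_gt (⌈ρ⌉₊) 1 with hc | hc
        · have hLeq1 : L = 1 := by rw [hLeq, max_eq_left hc]
          rw [hLeq1]
          simpa using hV2U
        · have hr1 : (1 : ℝ) < ρ := by exact_mod_cast Nat.lt_ceil.mp hc
          refine h2UV _ ?_
          rw [← hofρ]
          calc (L : ℝ≥0∞) = ENNReal.ofReal (L : ℝ) := (ENNReal.ofReal_natCast L).symm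
            _ ≤ ENNReal.ofReal (2 * ρ) := by
                refine ENNReal.ofReal_le_ofReal ?_
                have h1 : (⌈ρ⌉₊ : ℝ) < ρ + 1 := Nat.ceil_lt_add_one (by linarith)
                have h2' : L ≤ ⌈ρ⌉₊ := by rw [hLeq]; exact max_le (by omega) le_rfl
                have h2 : (L : ℝ) ≤ (⌈ρ⌉₊ : ℝ) := by exact_mod_cast h2'
                linarith
            _ = 2 * ENNReal.ofReal ρ := by
                rw [ENNReal.ofReal_mul (by norm_num)]
                norm_num
      have hXr : ((L : ℝ≥0∞) * V) ^ r = ((L : ℝ≥0∞) * V) ^ (r - 1) * ((L : ℝ≥0∞) * V) := by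
        calc ((L : ℝ≥0∞) * V) ^ r = ((L : ℝ≥0∞) * V) ^ (r - 1 + 1) := by norm_num
          _ = ((L : ℝ≥0∞) * V) ^ (r - 1) * ((L : ℝ≥0∞) * V) ^ (1 : ℝ) :=
              ENNReal.rpow_add_of_nonneg _ _ (by linarith) zero_le_one
          _ = _ := by rw [ENNReal.rpow_one]
      have hUr : U ^ r = U ^ (r - 1) * U := by
        calc U ^ r = U ^ (r - 1 + 1) := by norm_num
          _ = U ^ (r - 1) * U ^ (1 : ℝ) :=
              ENNReal.rpow_add_of_nonneg _ _ (by linarith) zero_le_one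
          _ = _ := by rw [ENNReal.rpow_one]
      have hX1 : ((L : ℝ≥0∞) * V) ^ (r - 1) ≤ 2 ^ (r - 1) * U ^ (r - 1) := by
        rw [← ENNReal.mul_rpow_of_nonneg _ _ (by linarith : (0 : ℝ) ≤ r - 1)]
        exact ENNReal.rpow_le_rpow hLV2U (by linarith)
      have hcast : ((m : ℝ≥0∞) + 1) * (L : ℝ≥0∞) ≤ 4 * (N : ℝ≥0∞) := by
        have hnat : (m + 1) * L ≤ 4 * N := by
          calc (m + 1) * L ≤ (2 * m) * L := Nat.mul_le_mul_right _ (by omega)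
            _ = 2 * (m * L) := by ring
            _ ≤ 2 * (2 * N) := Nat.mul_le_mul_left _ hmLle
            _ = 4 * N := by ring
        calc ((m : ℝ≥0∞) + 1) * (L : ℝ≥0∞) = (((m + 1) * L : ℕ) : ℝ≥0∞) := by push_cast; ring
          _ ≤ ((4 * N : ℕ) : ℝ≥0∞) := Nat.cast_le.mpr hnat
          _ = 4 * (N : ℝ≥0∞) := by push_cast; ring
      calc ((m : ℝ≥0∞) + 1) * (((L : ℝ≥0∞) * V) ^ r + U ^ r)
          = ((m : ℝ≥0∞) + 1) * (((L : ℝ≥0∞) * V) ^ (r - 1) * ((L : ℝ≥0∞) * V))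
            + ((m : ℝ≥0∞) + 1) * (U ^ (r - 1) * U) := by rw [hXr, hUr]; ring
        _ ≤ ((m : ℝ≥0∞) + 1) * ((2 ^ (r - 1) * U ^ (r - 1)) * ((L : ℝ≥0∞) * V))
            + ((m : ℝ≥0∞) + 1) * (U ^ (r - 1) * ((L : ℝ≥0∞) * V)) := by
            exact add_le_add (mul_le_mul' le_rfl (mul_le_mul' hX1 le_rfl))
              (mul_le_mul' le_rfl (mul_le_mul' le_rfl hULV))
        _ = 2 ^ (r - 1) * ((((m : ℝ≥0∞) + 1) * (L : ℝ≥0∞)) * (U ^ (r - 1) * V))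
            + (((m : ℝ≥0∞) + 1) * (L : ℝ≥0∞)) * (U ^ (r - 1) * V) := by ring
        _ ≤ 2 ^ (r - 1) * ((4 * (N : ℝ≥0∞)) * (U ^ (r - 1) * V))
            + (4 * (N : ℝ≥0∞)) * (U ^ (r - 1) * V) := by
            exact add_le_add (mul_le_mul' le_rfl (mul_le_mul' hcast le_rfl))
              (mul_le_mul' hcast le_rfl)
        _ = (2 ^ (r - 1) * 4 + 4) * ((N : ℝ≥0∞) * U ^ (r - 1) * V) := by ring
        _ ≤ K * max (U ^ r) ((N : ℝ≥0∞) * U ^ (r - 1) * V) := by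
            rw [hK]
            exact mul_le_mul' le_rfl (le_max_right _ _)
    · have hNle : N ≤ max 1 ⌈ρ⌉₊ := not_lt.mp hcase
      have hLeq : L = N := min_eq_left hNle
      have hceil : N ≤ ⌈ρ⌉₊ := by
        rcases le_or_gt (⌈ρ⌉₊) 1 with hc | hc
        · rw [max_eq_left hc] at hNle; omega
        · rw [max_eq_right (by omega)] at hNle; exact hNle
      have hm1' : m = 1 := by
        rw [hmdef, hLeq]
        have : (N - 1) / N = 0 := Nat.div_eq_of_lt (by omega)
        omega
      have hLV2U : (L : ℝ≥0∞) * V ≤ 2 * U := by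
        refine h2UV _ ?_
        rw [← hofρ]
        have hρN : ((N : ℝ) - 1) < ρ := by
          have h1 := Nat.lt_ceil.mp (show N - 1 < ⌈ρ⌉₊ by omega)
          have h2 : ((N - 1 : ℕ) : ℝ) = (N : ℝ) - 1 := by
            push_cast [Nat.cast_sub (by omega : 1 ≤ N)]
            ring
          rw [h2] at h1
          exact h1
        have hNρ : (L : ℝ) ≤ 2 * ρ := by
          rw [hLeq]
          have h3 : (2 : ℝ) ≤ (N : ℝ) := by exact_mod_cast hN2
          linarith
        calc (L : ℝ≥0∞) = ENNReal.ofReal (L : ℝ) := (ENNReal.ofReal_natCast L).symm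
          _ ≤ ENNReal.ofReal (2 * ρ) := ENNReal.ofReal_le_ofReal hNρ
          _ = 2 * ENNReal.ofReal ρ := by
              rw [ENNReal.ofReal_mul (by norm_num)]
              norm_num
      have h2r : ((L : ℝ≥0∞) * V) ^ r ≤ 2 ^ r * U ^ r := by
        rw [← ENNReal.mul_rpow_of_nonneg _ _ hr0.le]
        exact ENNReal.rpow_le_rpow hLV2U hr0.le
      have h2split : (2 : ℝ≥0∞) ^ r = 2 ^ (r - 1) * 2 := by
        calc (2 : ℝ≥0∞) ^ r = 2 ^ (r - 1 + 1) := by norm_num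
          _ = 2 ^ (r - 1) * 2 ^ (1 : ℝ) :=
              ENNReal.rpow_add_of_nonneg _ _ (by linarith) zero_le_one
          _ = _ := by rw [ENNReal.rpow_one]
      rw [hm1']
      calc (((1 : ℕ) : ℝ≥0∞) + 1) * (((L : ℝ≥0∞) * V) ^ r + U ^ r)
          ≤ (((1 : ℕ) : ℝ≥0∞) + 1) * (2 ^ r * U ^ r + U ^ r) := by
            exact mul_le_mul' le_rfl (add_le_add h2r le_rfl)
        _ = (2 ^ (r - 1) * 4 + 2) * U ^ r := by
            rw [h2split]
            push_cast
            ring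
        _ ≤ (2 ^ (r - 1) * 4 + 4) * U ^ r := by
            refine mul_le_mul' (add_le_add le_rfl (by norm_num)) le_rfl
        _ = K * U ^ r := by rw [hK]
        _ ≤ K * max (U ^ r) ((N : ℝ≥0∞) * U ^ (r - 1) * V) :=
            mul_le_mul' le_rfl (le_max_left _ _)
  have step123 : lpNorm n p (fun x => variationSeminorm r (Set.Icc u v) (fun j => f j x)) ≤
      12 * (((m : ℝ≥0∞) + 1) * (((L : ℝ≥0∞) * V) ^ r + U ^ r)) ^ (1 / r) := by
    refine le_trans step1 ?_
    rw [step2]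
    exact mul_le_mul' le_rfl (ENNReal.rpow_le_rpow step3 (one_div_nonneg.mpr hr0.le))
  have hWr : lpNorm n p (fun x => variationSeminorm r (Set.Icc u v) (fun j => f j x)) ^ r ≤
      12 ^ r * (K * max (U ^ r) ((N : ℝ≥0∞) * U ^ (r - 1) * V)) := by
    calc lpNorm n p (fun x => variationSeminorm r (Set.Icc u v) (fun j => f j x)) ^ r
        ≤ (12 * (((m : ℝ≥0∞) + 1) * (((L : ℝ≥0∞) * V) ^ r + U ^ r)) ^ (1 / r)) ^ r :=
          ENNReal.rpow_le_rpow step123 hr0.le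
      _ = 12 ^ r * (((m : ℝ≥0∞) + 1) * (((L : ℝ≥0∞) * V) ^ r + U ^ r)) := by
          rw [ENNReal.mul_rpow_of_nonneg _ _ hr0.le, ← ENNReal.rpow_mul,
            one_div_mul_cancel hr0.ne', ENNReal.rpow_one]
      _ ≤ 12 ^ r * (K * max (U ^ r) ((N : ℝ≥0∞) * U ^ (r - 1) * V)) :=
          mul_le_mul' le_rfl harith
  have hBr : (max U (((N : ℕ) : ℝ≥0∞) ^ (1 / r) * U ^ (1 - 1 / r) * V ^ (1 / r))) ^ r
      = max (U ^ r) ((N : ℝ≥0∞) * U ^ (r - 1) * V) := by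
    have hmax : ∀ x y : ℝ≥0∞, max x y ^ r = max (x ^ r) (y ^ r) := by
      intro x y
      rcases le_total x y with h | h
      · rw [max_eq_right h, max_eq_right (ENNReal.rpow_le_rpow h hr0.le)]
      · rw [max_eq_left h, max_eq_left (ENNReal.rpow_le_rpow h hr0.le)]
    rw [hmax]
    congr 1
    rw [ENNReal.mul_rpow_of_nonneg _ _ hr0.le, ENNReal.mul_rpow_of_nonneg _ _ hr0.le,
      ← ENNReal.rpow_mul, ← ENNReal.rpow_mul, ← ENNReal.rpow_mul,
      one_div_mul_cancel hr0.ne']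
    have e2 : (1 - 1 / r) * r = r - 1 := by
      rw [sub_mul, one_mul, one_div_mul_cancel hr0.ne']
    rw [e2, ENNReal.rpow_one, ENNReal.rpow_one]
  calc lpNorm n p (fun x => variationSeminorm r (Set.Icc u v) (fun j => f j x))
      = (lpNorm n p (fun x => variationSeminorm r (Set.Icc u v) (fun j => f j x)) ^ r) ^ (1 / r) := by
        rw [← ENNReal.rpow_mul, mul_one_div_cancel hr0.ne', ENNReal.rpow_one]
    _ ≤ ((12 ^ r * K) * max (U ^ r) ((N : ℝ≥0∞) * U ^ (r - 1) * V)) ^ (1 / r) := by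
        refine ENNReal.rpow_le_rpow ?_ (one_div_nonneg.mpr hr0.le)
        refine le_trans hWr (le_of_eq ?_)
        ring
    _ = (12 ^ r * K) ^ (1 / r) * (max (U ^ r) ((N : ℝ≥0∞) * U ^ (r - 1) * V)) ^ (1 / r) :=
        ENNReal.mul_rpow_of_nonneg _ _ (one_div_nonneg.mpr hr0.le)
    _ = (12 ^ r * K) ^ (1 / r) *
        max U (((N : ℕ) : ℝ≥0∞) ^ (1 / r) * U ^ (1 - 1 / r) * V ^ (1 / r)) := by
        rw [← hBr, ← ENNReal.rpow_mul, mul_one_div_cancel hr0.ne', ENNReal.rpow_one]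
end

section
/- Let $n = 1$, let $h$ be a Schwartz function on $\mathbb{R}$ with $|h(y)| \le \langle y \rangle^{-2}$, and set $h_j(y) = 2^{-j} h(2^{-j} y)$ for $j \in \mathbb{Z}$. Then for every $k \in \mathbb{Z}_+$, every $\tau$ with $1 \le |\tau| \le 2$, every $j \in \mathbb{Z}$, every $f \in L^1_{loc}(\mathbb{R})$, and every $x \in \mathbb{R}$: $|f * h_j(x - \tau 2^{j+k})| \le C \Big( M_{HL} f(x) + \sum_{l \ge 0} 2^{-l} \sum_{|v| \le l+2} M^{[2^{k+v}]} f(x) \Big)$, where $C$ is absolute. -/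
open scoped ENNReal

/-- The (uncentered) Hardy–Littlewood maximal function on `ℝ`. -/
noncomputable def maxHL (f : ℝ → ℂ) (x : ℝ) : ℝ≥0∞ :=
  ⨆ (a : ℝ) (b : ℝ) (_ : a < b) (_ : x ∈ Set.Icc a b),
    (ENNReal.ofReal (b - a))⁻¹ * ∫⁻ y in Set.Icc a b, (‖f y‖₊ : ℝ≥0∞)

/-- The shifted maximal operator `M^{[σ]}`: averages of `|f|` over the shifted set
`I^{(σ)} = (I - σ|I|) ∪ (I + σ|I|)`, over all bounded intervals `I ∋ x`. -/
noncomputable def shiftedMax (σ : ℝ) (f : ℝ → ℂ) (x : ℝ) : ℝ≥0∞ :=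
  ⨆ (a : ℝ) (b : ℝ) (_ : a < b) (_ : x ∈ Set.Icc a b),
    (ENNReal.ofReal (b - a))⁻¹ *
      ∫⁻ y in (Set.Icc (a - σ * (b - a)) (b - σ * (b - a)) ∪
          Set.Icc (a + σ * (b - a)) (b + σ * (b - a))), (‖f y‖₊ : ℝ≥0∞)

open MeasureTheory

/-- Dyadic interval around `z` of radius `ρ * 2^l`. -/
def Jset (z ρ : ℝ) (l : ℕ) : Set ℝ := Set.Icc (z - ρ * 2 ^ l) (z + ρ * 2 ^ l)

/-- Annular decomposition of `ℝ` based on the `Jset`s. -/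
def Aset (z ρ : ℝ) : ℕ → Set ℝ
  | 0 => Jset z ρ 0
  | (l + 1) => Jset z ρ (l + 1) \ Jset z ρ l

lemma mem_Jset {z ρ y : ℝ} {l : ℕ} : y ∈ Jset z ρ l ↔ |y - z| ≤ ρ * 2 ^ l := by
  rw [Jset, Set.mem_Icc, abs_le]
  constructor <;> rintro ⟨h1, h2⟩ <;> constructor <;> linarith

lemma Jset_mono {z ρ : ℝ} (hρ : 0 ≤ ρ) {l m : ℕ} (h : l ≤ m) : Jset z ρ l ⊆ Jset z ρ m := by
  have h2 : ρ * 2 ^ l ≤ ρ * 2 ^ m :=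
    mul_le_mul_of_nonneg_left (pow_le_pow_right₀ one_le_two h) hρ
  exact Set.Icc_subset_Icc (by linarith) (by linarith)

lemma Aset_subset (z ρ : ℝ) (l : ℕ) : Aset z ρ l ⊆ Jset z ρ l := by
  cases l with
  | zero => exact subset_rfl
  | succ m => exact Set.diff_subset

lemma Aset_measurable (z ρ : ℝ) (l : ℕ) : MeasurableSet (Aset z ρ l) := by
  cases l with
  | zero => exact measurableSet_Icc
  | succ m => exact measurableSet_Icc.diff measurableSet_Icc

lemma Aset_disjoint {z ρ : ℝ} (hρ : 0 ≤ ρ) :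
    Pairwise (Function.onFun Disjoint (Aset z ρ)) := by
  have key : ∀ l m, l < m → Disjoint (Aset z ρ l) (Aset z ρ m) := by
    intro l m hlm
    obtain ⟨m', rfl⟩ : ∃ m', m = m' + 1 := ⟨m - 1, by omega⟩
    have h1 : Aset z ρ l ⊆ Jset z ρ m' :=
      (Aset_subset z ρ l).trans (Jset_mono hρ (by omega))
    exact Set.disjoint_sdiff_right.mono_left h1
  intro l m hne
  rcases hne.lt_or_gt with hlt | hlt
  · exact key l m hlt
  · exact (key m l hlt).symm

lemma Aset_union {z ρ : ℝ} (hρ : 0 < ρ) : (⋃ l, Aset z ρ l) = Set.univ := by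
  classical
  ext y
  simp only [Set.mem_iUnion, Set.mem_univ, iff_true]
  have hex : ∃ l : ℕ, y ∈ Jset z ρ l := by
    obtain ⟨n, hn⟩ := pow_unbounded_of_one_lt (|y - z| / ρ) one_lt_two
    rw [div_lt_iff₀ hρ] at hn
    exact ⟨n, mem_Jset.mpr (by nlinarith)⟩
  cases hfl : Nat.find hex with
  | zero =>
    refine ⟨0, ?_⟩
    have := Nat.find_spec hex
    rwa [hfl] at this
  | succ m =>
    refine ⟨m + 1, ?_, ?_⟩
    · have := Nat.find_spec hex
      rwa [hfl] at this
    · exact Nat.find_min hex (by omega)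

/-- For a Schwartz-type `h` on `ℝ` with `|h(y)| ≤ ⟨y⟩^{-2}`, `h_j(y) = 2^{-j}h(2^{-j}y)`,
`k ∈ ℤ₊`, `1 ≤ |τ| ≤ 2`:
`|f * h_j(x - τ 2^{j+k})| ≤ C (M_{HL}f(x) + ∑_{l≥0} 2^{-l} ∑_{|v|≤l+2} M^{[2^{k+v}]}f(x))`. -/
theorem statement15 :
    ∃ C : ℝ≥0∞, 0 < C ∧ C ≠ ⊤ ∧
      ∀ h : ℝ → ℂ, (∀ y : ℝ, ‖h y‖ ≤ (1 + y ^ 2)⁻¹) →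
      ∀ k : ℕ, 1 ≤ k → ∀ τ : ℝ, 1 ≤ |τ| → |τ| ≤ 2 → ∀ j : ℤ, ∀ f : ℝ → ℂ, ∀ x : ℝ,
        (∫⁻ y, (‖f y‖₊ : ℝ≥0∞) *
            (ENNReal.ofReal ((2 : ℝ) ^ (-j)) *
              (‖h ((2 : ℝ) ^ (-j) * (x - τ * (2 : ℝ) ^ (j + (k : ℤ)) - y))‖₊ : ℝ≥0∞))) ≤
          C * (maxHL f x +
            ∑' l : ℕ, ((2 : ℝ≥0∞) ^ l)⁻¹ *
              ∑ v ∈ Finset.Icc (-(l : ℤ) - 2) ((l : ℤ) + 2),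
                shiftedMax ((2 : ℝ) ^ ((k : ℤ) + v)) f x) := by
  classical
  refine ⟨16, by norm_num, by norm_num, ?_⟩
  intro h hh k _hk τ hτ1 hτ2 j f x
  set ρ : ℝ := (2 : ℝ) ^ j with hρdef
  have hρ : 0 < ρ := zpow_pos two_pos _
  have hρ' : (0 : ℝ) < (2 : ℝ) ^ (-j) := zpow_pos two_pos _
  have hid : (2 : ℝ) ^ (-j) * ρ = 1 := by
    rw [hρdef, ← zpow_add₀ (two_ne_zero)]
    simp
  set c : ℝ := τ * (2 : ℝ) ^ (j + (k : ℤ)) with hcdef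
  set z : ℝ := x - c with hzdef
  -- the shifted maximal function bound on dyadic intervals
  have hshift : ∀ l : ℕ, (∫⁻ y in Jset z ρ l, (‖f y‖₊ : ℝ≥0∞)) ≤
      ENNReal.ofReal (|τ| * (2 * (ρ * 2 ^ l))) *
        shiftedMax ((2 : ℝ) ^ ((k : ℤ) + (-(l : ℤ) - 1))) f x := by
    intro l
    set σ : ℝ := (2 : ℝ) ^ ((k : ℤ) + (-(l : ℤ) - 1)) with hσdef
    set a : ℝ := x - ρ * 2 ^ l with hadef
    set b : ℝ := x - ρ * 2 ^ l + |τ| * (2 * (ρ * 2 ^ l)) with hbdef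
    have hpl : (0 : ℝ) < ρ * 2 ^ l := by positivity
    have h9 : 2 * (ρ * 2 ^ l) ≤ |τ| * (2 * (ρ * 2 ^ l)) :=
      le_mul_of_one_le_left (by positivity) hτ1
    have hL : b - a = |τ| * (2 * (ρ * 2 ^ l)) := by rw [hadef, hbdef]; ring
    have hab : a < b := by rw [hadef, hbdef]; nlinarith
    have hxI : x ∈ Set.Icc a b := ⟨by rw [hadef]; linarith, by rw [hbdef]; nlinarith⟩
    have hσ2 : σ * (2 * (ρ * 2 ^ l)) = (2 : ℝ) ^ (j + (k : ℤ)) := by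
      have h1 : (2 : ℝ) * (2 : ℝ) ^ l = (2 : ℝ) ^ ((l : ℤ) + 1) := by
        rw [zpow_add₀ two_ne_zero, zpow_natCast, zpow_one]; ring
      have h2 : ((k : ℤ) + (-(l : ℤ) - 1)) + ((l : ℤ) + 1) = (k : ℤ) := by ring
      calc σ * (2 * (ρ * 2 ^ l))
          = (2 : ℝ) ^ ((k : ℤ) + (-(l : ℤ) - 1)) * ((2 : ℝ) ^ ((l : ℤ) + 1) * ρ) := by
            rw [hσdef, ← h1]; ring
        _ = (2 : ℝ) ^ (((k : ℤ) + (-(l : ℤ) - 1)) + ((l : ℤ) + 1)) * ρ := by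
            rw [← mul_assoc, ← zpow_add₀ two_ne_zero]
        _ = (2 : ℝ) ^ (k : ℤ) * ρ := by rw [h2]
        _ = (2 : ℝ) ^ (j + (k : ℤ)) := by
            rw [hρdef, ← zpow_add₀ two_ne_zero]
            congr 1
            ring
    have hσL : σ * (b - a) = |τ| * (2 : ℝ) ^ (j + (k : ℤ)) := by
      rw [hL, ← hσ2]; ring
    have hJU : Jset z ρ l ⊆
        Set.Icc (a - σ * (b - a)) (b - σ * (b - a)) ∪
          Set.Icc (a + σ * (b - a)) (b + σ * (b - a)) := by
      rcases le_or_gt 0 τ with hτp | hτn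
      · have habs : |τ| = τ := abs_of_nonneg hτp
        rw [habs] at hσL
        apply Set.subset_union_of_subset_left
        rw [Jset]
        apply Set.Icc_subset_Icc
        · linarith
        · rw [habs] at h9 hbdef
          linarith
      · have habs : |τ| = -τ := abs_of_neg hτn
        rw [habs] at hσL
        apply Set.subset_union_of_subset_right
        rw [Jset]
        apply Set.Icc_subset_Icc
        · linarith
        · rw [habs] at h9 hbdef
          linarith
    have hba0 : ENNReal.ofReal (b - a) ≠ 0 :=
      (ENNReal.ofReal_pos.mpr (sub_pos.mpr hab)).ne'
    calc (∫⁻ y in Jset z ρ l, (‖f y‖₊ : ℝ≥0∞))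
        ≤ ∫⁻ y in (Set.Icc (a - σ * (b - a)) (b - σ * (b - a)) ∪
            Set.Icc (a + σ * (b - a)) (b + σ * (b - a))), (‖f y‖₊ : ℝ≥0∞) :=
          lintegral_mono_set hJU
      _ = ENNReal.ofReal (b - a) * ((ENNReal.ofReal (b - a))⁻¹ *
            ∫⁻ y in (Set.Icc (a - σ * (b - a)) (b - σ * (b - a)) ∪
              Set.Icc (a + σ * (b - a)) (b + σ * (b - a))), (‖f y‖₊ : ℝ≥0∞)) := by
          rw [← mul_assoc, ENNReal.mul_inv_cancel hba0 ENNReal.ofReal_ne_top, one_mul]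
      _ ≤ ENNReal.ofReal (b - a) * shiftedMax σ f x := by
          apply mul_le_mul_right
          rw [shiftedMax]
          exact le_iSup_of_le a (le_iSup_of_le b (le_iSup_of_le hab (le_iSup_of_le hxI le_rfl)))
      _ = ENNReal.ofReal (|τ| * (2 * (ρ * 2 ^ l))) *
            shiftedMax ((2 : ℝ) ^ ((k : ℤ) + (-(l : ℤ) - 1))) f x := by
          rw [hL, hσdef]
  -- the pointwise kernel bound on each annulus
  have hker : ∀ (l : ℕ), ∀ y ∈ Aset z ρ l,
      (‖f y‖₊ : ℝ≥0∞) * (ENNReal.ofReal ((2 : ℝ) ^ (-j)) *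
          (‖h ((2 : ℝ) ^ (-j) * (z - y))‖₊ : ℝ≥0∞)) ≤
        ENNReal.ofReal ((2 : ℝ) ^ (-j) * (4 * ((2 : ℝ) ^ (2 * l))⁻¹)) * ‖f y‖₊ := by
    intro l y hy
    have hb : ‖h ((2 : ℝ) ^ (-j) * (z - y))‖ ≤ 4 * ((2 : ℝ) ^ (2 * l))⁻¹ := by
      have h0 := hh ((2 : ℝ) ^ (-j) * (z - y))
      have hpos : (0 : ℝ) < 1 + ((2 : ℝ) ^ (-j) * (z - y)) ^ 2 := by positivity
      cases l with
      | zero =>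
        have h2 : (1 + ((2 : ℝ) ^ (-j) * (z - y)) ^ 2)⁻¹ ≤ 1 :=
          inv_le_one_of_one_le₀ (by nlinarith)
        have h4 : (4:ℝ) * ((2:ℝ) ^ (2*0))⁻¹ = 4 := by norm_num
        rw [h4]
        linarith
      | succ m =>
        obtain ⟨hy1, hy2⟩ := hy
        have h3 : ρ * 2 ^ m < |y - z| := by
          by_contra hcon
          push_neg at hcon
          exact hy2 (mem_Jset.mpr hcon)
        have h4 : (2 : ℝ) ^ m ≤ |(2 : ℝ) ^ (-j) * (z - y)| := by
          rw [abs_mul, abs_of_pos hρ', abs_sub_comm z y]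
          calc (2 : ℝ) ^ m = (2 : ℝ) ^ (-j) * (ρ * 2 ^ m) := by
                rw [← mul_assoc, hid, one_mul]
            _ ≤ (2 : ℝ) ^ (-j) * |y - z| := by nlinarith
        have h6 : ((2 : ℝ) ^ m) ^ 2 ≤ ((2 : ℝ) ^ (-j) * (z - y)) ^ 2 := by
          rw [← sq_abs ((2 : ℝ) ^ (-j) * (z - y))]
          exact pow_le_pow_left₀ (by positivity) h4 2
        have h7 : (2 : ℝ) ^ (2 * (m + 1)) = 4 * ((2 : ℝ) ^ m) ^ 2 := by
          have he : 2 * (m + 1) = m * 2 + 2 := by ring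
          rw [he, pow_add, ← pow_mul]
          ring
        have h8 : (2 : ℝ) ^ (2 * (m + 1)) / 4 ≤ 1 + ((2 : ℝ) ^ (-j) * (z - y)) ^ 2 := by
          calc (2 : ℝ) ^ (2 * (m + 1)) / 4 = ((2 : ℝ) ^ m) ^ 2 := by rw [h7]; ring
            _ ≤ ((2 : ℝ) ^ (-j) * (z - y)) ^ 2 := h6
            _ ≤ 1 + ((2 : ℝ) ^ (-j) * (z - y)) ^ 2 := by linarith
        calc ‖h ((2 : ℝ) ^ (-j) * (z - y))‖ ≤ (1 + ((2 : ℝ) ^ (-j) * (z - y)) ^ 2)⁻¹ := h0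
          _ ≤ ((2 : ℝ) ^ (2 * (m + 1)) / 4)⁻¹ := inv_anti₀ (by positivity) h8
          _ = 4 * ((2 : ℝ) ^ (2 * (m + 1)))⁻¹ := by
              rw [inv_div, div_eq_mul_inv]
    calc (‖f y‖₊ : ℝ≥0∞) * (ENNReal.ofReal ((2 : ℝ) ^ (-j)) *
            (‖h ((2 : ℝ) ^ (-j) * (z - y))‖₊ : ℝ≥0∞))
        ≤ (‖f y‖₊ : ℝ≥0∞) * (ENNReal.ofReal ((2 : ℝ) ^ (-j)) *
            ENNReal.ofReal (4 * ((2 : ℝ) ^ (2 * l))⁻¹)) := by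
          gcongr
          rw [← ENNReal.ofReal_coe_nnreal, coe_nnnorm]
          exact ENNReal.ofReal_le_ofReal hb
      _ = ENNReal.ofReal ((2 : ℝ) ^ (-j) * (4 * ((2 : ℝ) ^ (2 * l))⁻¹)) * ‖f y‖₊ := by
          rw [ENNReal.ofReal_mul (le_of_lt hρ')]
          ring
  -- per-annulus estimate
  have key : ∀ l : ℕ,
      (∫⁻ y in Aset z ρ l, (‖f y‖₊ : ℝ≥0∞) * (ENNReal.ofReal ((2 : ℝ) ^ (-j)) *
          (‖h ((2 : ℝ) ^ (-j) * (z - y))‖₊ : ℝ≥0∞))) ≤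
        16 * (((2 : ℝ≥0∞) ^ l)⁻¹ *
          shiftedMax ((2 : ℝ) ^ ((k : ℤ) + (-(l : ℤ) - 1))) f x) := by
    intro l
    have harith : ((2 : ℝ) ^ (-j) * (4 * ((2 : ℝ) ^ (2 * l))⁻¹)) * (|τ| * (2 * (ρ * 2 ^ l))) =
        8 * |τ| * ((2 : ℝ) ^ l)⁻¹ := by
      have hjne : ((2 : ℝ) ^ j) ≠ 0 := ne_of_gt (zpow_pos two_pos j)
      have hlne : ((2 : ℝ) ^ l) ≠ 0 := by positivity
      rw [hρdef, zpow_neg, two_mul l, pow_add]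
      field_simp
      ring
    calc (∫⁻ y in Aset z ρ l, (‖f y‖₊ : ℝ≥0∞) * (ENNReal.ofReal ((2 : ℝ) ^ (-j)) *
            (‖h ((2 : ℝ) ^ (-j) * (z - y))‖₊ : ℝ≥0∞)))
        ≤ ∫⁻ y in Aset z ρ l,
            ENNReal.ofReal ((2 : ℝ) ^ (-j) * (4 * ((2 : ℝ) ^ (2 * l))⁻¹)) * ‖f y‖₊ :=
          setLIntegral_mono' (Aset_measurable z ρ l) (hker l)
      _ = ENNReal.ofReal ((2 : ℝ) ^ (-j) * (4 * ((2 : ℝ) ^ (2 * l))⁻¹)) *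
            ∫⁻ y in Aset z ρ l, (‖f y‖₊ : ℝ≥0∞) :=
          lintegral_const_mul' _ _ ENNReal.ofReal_ne_top
      _ ≤ ENNReal.ofReal ((2 : ℝ) ^ (-j) * (4 * ((2 : ℝ) ^ (2 * l))⁻¹)) *
            ∫⁻ y in Jset z ρ l, (‖f y‖₊ : ℝ≥0∞) :=
          mul_le_mul_right (lintegral_mono_set (Aset_subset z ρ l)) _
      _ ≤ ENNReal.ofReal ((2 : ℝ) ^ (-j) * (4 * ((2 : ℝ) ^ (2 * l))⁻¹)) *
            (ENNReal.ofReal (|τ| * (2 * (ρ * 2 ^ l))) *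
              shiftedMax ((2 : ℝ) ^ ((k : ℤ) + (-(l : ℤ) - 1))) f x) :=
          mul_le_mul_right (hshift l) _
      _ = ENNReal.ofReal (((2 : ℝ) ^ (-j) * (4 * ((2 : ℝ) ^ (2 * l))⁻¹)) *
            (|τ| * (2 * (ρ * 2 ^ l)))) *
              shiftedMax ((2 : ℝ) ^ ((k : ℤ) + (-(l : ℤ) - 1))) f x := by
          rw [← mul_assoc, ← ENNReal.ofReal_mul (by positivity)]
      _ ≤ ENNReal.ofReal (16 * ((2 : ℝ) ^ l)⁻¹) *
            shiftedMax ((2 : ℝ) ^ ((k : ℤ) + (-(l : ℤ) - 1))) f x := by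
          apply mul_le_mul_left
          apply ENNReal.ofReal_le_ofReal
          rw [harith]
          have hnn : (0 : ℝ) ≤ ((2 : ℝ) ^ l)⁻¹ := by positivity
          nlinarith
      _ = 16 * (((2 : ℝ≥0∞) ^ l)⁻¹ *
            shiftedMax ((2 : ℝ) ^ ((k : ℤ) + (-(l : ℤ) - 1))) f x) := by
          rw [ENNReal.ofReal_mul (by norm_num), ENNReal.ofReal_inv_of_pos (by positivity),
            ENNReal.ofReal_pow (by norm_num)]
          norm_num [mul_assoc]
  -- assembly
  calc (∫⁻ y, (‖f y‖₊ : ℝ≥0∞) * (ENNReal.ofReal ((2 : ℝ) ^ (-j)) *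
          (‖h ((2 : ℝ) ^ (-j) * (z - y))‖₊ : ℝ≥0∞)))
      = ∫⁻ y in Set.univ, (‖f y‖₊ : ℝ≥0∞) * (ENNReal.ofReal ((2 : ℝ) ^ (-j)) *
          (‖h ((2 : ℝ) ^ (-j) * (z - y))‖₊ : ℝ≥0∞)) := (setLIntegral_univ _).symm
    _ = ∫⁻ y in (⋃ l, Aset z ρ l), (‖f y‖₊ : ℝ≥0∞) * (ENNReal.ofReal ((2 : ℝ) ^ (-j)) *
          (‖h ((2 : ℝ) ^ (-j) * (z - y))‖₊ : ℝ≥0∞)) := by rw [Aset_union hρ]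
    _ = ∑' l : ℕ, ∫⁻ y in Aset z ρ l, (‖f y‖₊ : ℝ≥0∞) * (ENNReal.ofReal ((2 : ℝ) ^ (-j)) *
          (‖h ((2 : ℝ) ^ (-j) * (z - y))‖₊ : ℝ≥0∞)) :=
        lintegral_iUnion (Aset_measurable z ρ) (Aset_disjoint hρ.le) _
    _ ≤ ∑' l : ℕ, 16 * (((2 : ℝ≥0∞) ^ l)⁻¹ *
          shiftedMax ((2 : ℝ) ^ ((k : ℤ) + (-(l : ℤ) - 1))) f x) := ENNReal.tsum_le_tsum key
    _ = 16 * ∑' l : ℕ, ((2 : ℝ≥0∞) ^ l)⁻¹ *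
          shiftedMax ((2 : ℝ) ^ ((k : ℤ) + (-(l : ℤ) - 1))) f x := ENNReal.tsum_mul_left
    _ ≤ 16 * ∑' l : ℕ, ((2 : ℝ≥0∞) ^ l)⁻¹ *
          ∑ v ∈ Finset.Icc (-(l : ℤ) - 2) ((l : ℤ) + 2),
            shiftedMax ((2 : ℝ) ^ ((k : ℤ) + v)) f x := by
        apply mul_le_mul_right
        apply ENNReal.tsum_le_tsum
        intro l
        apply mul_le_mul_right
        have hmem : (-(l : ℤ) - 1) ∈ Finset.Icc (-(l : ℤ) - 2) ((l : ℤ) + 2) :=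
          Finset.mem_Icc.mpr ⟨by omega, by omega⟩
        exact Finset.single_le_sum
          (f := fun v : ℤ => shiftedMax ((2 : ℝ) ^ ((k : ℤ) + v)) f x)
          (fun i _ => zero_le) hmem
    _ ≤ 16 * (maxHL f x + ∑' l : ℕ, ((2 : ℝ≥0∞) ^ l)⁻¹ *
          ∑ v ∈ Finset.Icc (-(l : ℤ) - 2) ((l : ℤ) + 2),
            shiftedMax ((2 : ℝ) ^ ((k : ℤ) + v)) f x) :=
        mul_le_mul_right le_add_self _
end

section
/- Let $2 < r < \infty$. For any complex sequence $(a_j)_{j \in \mathbb{N}}$, $\|(a_j)_{j\in\mathbb{N}}\|_{V^r} \le C \Big( \|(a_{2^k})_{k \in \mathbb{N}_0, 2^k \in \mathbb{N}}\|_{V^r} + \big( \sum_{k \in \mathbb{N}_0} \|(a_j)_{j \in [2^k, 2^{k+1}) \cap \mathbb{N}}\|_{V^r}^r \big)^{1/r} \Big)$ for an absolute constant $C$. -/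
open scoped ENNReal

lemma le_variationSeminorm {r : ℝ} {I : Set ℕ} {a : ℕ → ℂ} {J : ℕ} {t : ℕ → ℕ}
    (ht : StrictMonoOn t (Set.Iic J)) (htI : ∀ j ≤ J, t j ∈ I) :
    (∑ j ∈ Finset.range J, (‖a (t (j + 1)) - a (t j)‖₊ : ℝ≥0∞) ^ r) ^ (1 / r) ≤
      variationSeminorm r I a :=
  le_iSup_of_le J (le_iSup_of_le t (le_iSup_of_le ht (le_iSup_of_le htI le_rfl)))

lemma sum_le_var_rpow {r : ℝ} (hr : 0 < r) {I : Set ℕ} {a : ℕ → ℂ} {J : ℕ} {t : ℕ → ℕ}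
    (ht : StrictMonoOn t (Set.Iic J)) (htI : ∀ j ≤ J, t j ∈ I) :
    ∑ j ∈ Finset.range J, (‖a (t (j + 1)) - a (t j)‖₊ : ℝ≥0∞) ^ r ≤
      (variationSeminorm r I a) ^ r := by
  have h1 := le_variationSeminorm (r := r) (a := a) ht htI
  calc ∑ j ∈ Finset.range J, (‖a (t (j + 1)) - a (t j)‖₊ : ℝ≥0∞) ^ r
      = ((∑ j ∈ Finset.range J, (‖a (t (j + 1)) - a (t j)‖₊ : ℝ≥0∞) ^ r) ^ (1 / r)) ^ r := by
        rw [one_div, ENNReal.rpow_inv_rpow hr.ne']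
    _ ≤ (variationSeminorm r I a) ^ r := ENNReal.rpow_le_rpow h1 hr.le

lemma pair_le_var {r : ℝ} (hr : 0 < r) {I : Set ℕ} {a : ℕ → ℂ} {p q : ℕ}
    (hpq : p ≤ q) (hp : p ∈ I) (hq : q ∈ I) :
    (‖a q - a p‖₊ : ℝ≥0∞) ≤ variationSeminorm r I a := by
  rcases eq_or_lt_of_le hpq with h | h
  · subst h; simp
  · have ht : StrictMonoOn (fun i => if i = 0 then p else q) (Set.Iic 1) := by
      intro x hx y hy hxy
      simp only [Set.mem_Iic] at hx hy
      have hx0 : x = 0 := by omega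
      have hy1 : y = 1 := by omega
      subst hx0; subst hy1; simpa using h
    have htI : ∀ j ≤ 1, (fun i => if i = 0 then p else q) j ∈ I := by
      intro j hj
      interval_cases j <;> simpa
    have h1 := le_variationSeminorm (r := r) (a := a) ht htI
    have h2 : (∑ j ∈ Finset.range 1,
        (‖a ((fun i => if i = 0 then p else q) (j + 1)) -
          a ((fun i => if i = 0 then p else q) j)‖₊ : ℝ≥0∞) ^ r) ^ (1 / r)
        = (‖a q - a p‖₊ : ℝ≥0∞) := by
      rw [Finset.sum_range_one]
      norm_num [one_div, ENNReal.rpow_rpow_inv hr.ne']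
    rwa [h2] at h1

lemma chain_sum {r : ℝ} (f : ℕ → ℂ) (b : ℕ → ℕ) :
    ∀ J : ℕ, (∀ j < J, b j ≤ b (j + 1)) →
    ∃ m : ℕ, ∃ u : ℕ → ℕ, StrictMonoOn u (Set.Iic m) ∧ u m = b J ∧
      ∑ j ∈ (Finset.range J).filter (fun j => b j ≠ b (j + 1)),
          (‖f (b (j + 1)) - f (b j)‖₊ : ℝ≥0∞) ^ r
        ≤ ∑ i ∈ Finset.range m, (‖f (u (i + 1)) - f (u i)‖₊ : ℝ≥0∞) ^ r := by
  intro J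
  induction J with
  | zero =>
    intro _
    exact ⟨0, fun _ => b 0, fun x hx y hy hxy => by
      simp only [Set.mem_Iic, Nat.le_zero] at hx hy; omega, rfl, by simp⟩
  | succ J ih =>
    intro hb
    obtain ⟨m, u, hu, hum, hsum⟩ := ih (fun j hj => hb j (by omega))
    by_cases hP : b J = b (J + 1)
    · refine ⟨m, u, hu, by rw [hum, hP], ?_⟩
      rwa [Finset.range_add_one, Finset.filter_insert, if_neg (by simpa using hP)]
    · have hlt : b J < b (J + 1) := lt_of_le_of_ne (hb J (by omega)) hP
      refine ⟨m + 1, fun i => if i ≤ m then u i else b (J + 1), ?_, ?_, ?_⟩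
      · intro x hx y hy hxy
        simp only [Set.mem_Iic] at hx hy
        dsimp only
        by_cases hym : y ≤ m
        · rw [if_pos (by omega : x ≤ m), if_pos hym]
          exact hu (Set.mem_Iic.2 (by omega)) (Set.mem_Iic.2 hym) hxy
        · have hxm : x ≤ m := by omega
          rw [if_neg hym, if_pos hxm]
          calc u x ≤ u m := by
                rcases eq_or_lt_of_le hxm with h | h
                · rw [h]
                · exact (hu (Set.mem_Iic.2 hxm) (Set.mem_Iic.2 le_rfl) h).le
            _ = b J := hum
            _ < b (J + 1) := hlt
      · simp
      · rw [Finset.range_add_one, Finset.filter_insert, if_pos (by simpa using hP),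
          Finset.sum_insert (by simp), Finset.sum_range_succ]
        have heq : ∀ i ∈ Finset.range m,
            (‖f ((fun i => if i ≤ m then u i else b (J + 1)) (i + 1)) -
              f ((fun i => if i ≤ m then u i else b (J + 1)) i)‖₊ : ℝ≥0∞) ^ r
            = (‖f (u (i + 1)) - f (u i)‖₊ : ℝ≥0∞) ^ r := by
          intro i hi
          simp only [Finset.mem_range] at hi
          dsimp only
          rw [if_pos (by omega : i + 1 ≤ m), if_pos (by omega : i ≤ m)]
        rw [Finset.sum_congr rfl heq]
        dsimp only
        rw [if_pos le_rfl, if_neg (by omega : ¬ m + 1 ≤ m), hum, add_comm]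
        exact add_le_add_left hsum _

/-- Long/short variation decomposition: for `2 < r < ∞` and any complex sequence `(a_j)_{j≥1}`,
`‖(a_j)_{j∈ℕ}‖_{V^r} ≤ C (‖(a_{2^k})_k‖_{V^r} + (∑_k ‖(a_j)_{j∈[2^k,2^{k+1})}‖_{V^r}^r)^{1/r})`
for an absolute constant `C`. -/
theorem statement18 :
    ∃ C : ℝ≥0∞, 0 < C ∧ C ≠ ⊤ ∧
      ∀ (r : ℝ), 2 < r → ∀ a : ℕ → ℂ,
        variationSeminorm r {j : ℕ | 1 ≤ j} a ≤
          C * (variationSeminorm r {j : ℕ | ∃ k : ℕ, j = 2 ^ k} a +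
            (∑' k : ℕ,
                (variationSeminorm r (Set.Ico (2 ^ k) (2 ^ (k + 1))) a) ^ r) ^ (1 / r)) := by
  classical
  refine ⟨3, by norm_num, by norm_num, ?_⟩
  intro r hr a
  have hr0 : (0:ℝ) < r := by linarith
  have hr1 : (1:ℝ) ≤ r := by linarith
  set L := variationSeminorm r {j : ℕ | ∃ k : ℕ, j = 2 ^ k} a with hLdef
  set T := ∑' k : ℕ, (variationSeminorm r (Set.Ico (2 ^ k) (2 ^ (k + 1))) a) ^ r with hTdef
  conv_lhs => rw [variationSeminorm]
  refine iSup_le fun J => iSup_le fun t => iSup_le fun ht => iSup_le fun htI => ?_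
  set b : ℕ → ℕ := fun j => Nat.log 2 (t j) with hbdef
  have htpos : ∀ j ≤ J, t j ≠ 0 := by
    intro j hj
    have := htI j hj
    simp only [Set.mem_setOf_eq] at this
    omega
  have hmono : ∀ i j, i ≤ j → j ≤ J → t i ≤ t j := by
    intro i j hij hj
    rcases eq_or_lt_of_le hij with h | h
    · rw [h]
    · exact (ht (Set.mem_Iic.2 (le_trans hij hj)) (Set.mem_Iic.2 hj) h).le
  have hble : ∀ i j, i ≤ j → j ≤ J → b i ≤ b j := fun i j hij hj =>
    Nat.log_mono_right (hmono i j hij hj)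
  have hlow : ∀ j ≤ J, 2 ^ (b j) ≤ t j := fun j hj => Nat.pow_log_le_self 2 (htpos j hj)
  have hhigh : ∀ j ≤ J, t j < 2 ^ (b j + 1) := fun j _ =>
    Nat.lt_pow_succ_log_self (by norm_num) _
  have hIco : ∀ j ≤ J, t j ∈ Set.Ico (2 ^ (b j)) (2 ^ (b j + 1)) := fun j hj =>
    ⟨hlow j hj, hhigh j hj⟩
  have hself : ∀ k : ℕ, (2:ℕ) ^ k ∈ Set.Ico ((2:ℕ) ^ k) (2 ^ (k + 1)) := fun k =>
    ⟨le_rfl, Nat.pow_lt_pow_right (by norm_num) (lt_add_one _)⟩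
  set x : ℕ → ℝ≥0∞ :=
    fun j => if b j = b (j + 1) then 0 else (‖a (t (j + 1)) - a (2 ^ (b (j + 1)))‖₊ : ℝ≥0∞)
    with hxdef
  set y : ℕ → ℝ≥0∞ :=
    fun j => if b j = b (j + 1) then 0 else (‖a (2 ^ (b (j + 1))) - a (2 ^ (b j))‖₊ : ℝ≥0∞)
    with hydef
  set z : ℕ → ℝ≥0∞ :=
    fun j => if b j = b (j + 1) then 0 else (‖a (2 ^ (b j)) - a (t j)‖₊ : ℝ≥0∞) with hzdef
  set w : ℕ → ℝ≥0∞ :=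
    fun j => if b j = b (j + 1) then (‖a (t (j + 1)) - a (t j)‖₊ : ℝ≥0∞) else 0 with hwdef
  have hpt : ∀ j, (‖a (t (j + 1)) - a (t j)‖₊ : ℝ≥0∞) ≤ x j + y j + z j + w j := by
    intro j
    by_cases hj : b j = b (j + 1)
    · simp [hxdef, hydef, hzdef, hwdef, hj]
    · simp only [hxdef, hydef, hzdef, hwdef, if_neg hj, add_zero]
      have heq : a (t (j + 1)) - a (t j) =
          (a (t (j + 1)) - a (2 ^ (b (j + 1)))) + (a (2 ^ (b (j + 1))) - a (2 ^ (b j)))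
            + (a (2 ^ (b j)) - a (t j)) := by ring
      rw [heq]
      exact_mod_cast (nnnorm_add_le _ _).trans (add_le_add_left (nnnorm_add_le _ _) _)
  -- bound for w : short variation, same-block part
  have hW : ∑ j ∈ Finset.range J, w j ^ r ≤ T := by
    have h1 : ∑ j ∈ Finset.range J, w j ^ r
        = ∑ j ∈ (Finset.range J).filter (fun j => b j = b (j + 1)),
            (‖a (t (j + 1)) - a (t j)‖₊ : ℝ≥0∞) ^ r := by
      rw [Finset.sum_filter]
      refine Finset.sum_congr rfl fun j _ => ?_
      by_cases hj : b j = b (j + 1) <;>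
        simp [hwdef, hj, ENNReal.zero_rpow_of_pos hr0]
    rw [h1, ← Finset.sum_fiberwise_of_maps_to (g := b) (t := Finset.range (b J + 1))
      (fun j hj => by
        simp only [Finset.mem_filter, Finset.mem_range] at hj ⊢
        have := hble j J (by omega) le_rfl
        omega)]
    have hinner : ∀ k ∈ Finset.range (b J + 1),
        ∑ j ∈ ((Finset.range J).filter (fun j => b j = b (j + 1))).filter (fun j => b j = k),
            (‖a (t (j + 1)) - a (t j)‖₊ : ℝ≥0∞) ^ r
          ≤ (variationSeminorm r (Set.Ico (2 ^ k) (2 ^ (k + 1))) a) ^ r := by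
      intro k _
      set Fk := ((Finset.range J).filter (fun j => b j = b (j + 1))).filter (fun j => b j = k)
        with hFk
      rcases Finset.eq_empty_or_nonempty Fk with hne | hne
      · rw [hne]; simp
      · set m := Fk.min' hne with hm
        set M := Fk.max' hne with hM
        have hmF : m ∈ Fk := Fk.min'_mem hne
        have hMF : M ∈ Fk := Fk.max'_mem hne
        simp only [hFk, Finset.mem_filter, Finset.mem_range] at hmF hMF
        have hmM : m ≤ M := Fk.min'_le _ (Fk.max'_mem hne)
        have hMJ : M + 1 ≤ J := by omega
        have hbm : b m = k := hmF.2
        have hbM1 : b (M + 1) = k := by rw [← hMF.1.2]; exact hMF.2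
        have hsub : Fk ⊆ Finset.Icc m M := fun j hj =>
          Finset.mem_Icc.2 ⟨Fk.min'_le _ hj, Fk.le_max' _ hj⟩
        calc ∑ j ∈ Fk, (‖a (t (j + 1)) - a (t j)‖₊ : ℝ≥0∞) ^ r
            ≤ ∑ j ∈ Finset.Icc m M, (‖a (t (j + 1)) - a (t j)‖₊ : ℝ≥0∞) ^ r :=
              Finset.sum_le_sum_of_subset hsub
          _ = ∑ i ∈ Finset.range (M + 1 - m),
                (‖a (t (m + i + 1)) - a (t (m + i))‖₊ : ℝ≥0∞) ^ r := by
              rw [← Finset.Ico_add_one_right_eq_Icc, Finset.sum_Ico_eq_sum_range]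
          _ ≤ (variationSeminorm r (Set.Ico (2 ^ k) (2 ^ (k + 1))) a) ^ r := by
              refine sum_le_var_rpow hr0 (t := fun i => t (m + i)) ?_ ?_
              · intro i hi i' hi' hii
                simp only [Set.mem_Iic] at hi hi'
                exact ht (Set.mem_Iic.2 (by omega)) (Set.mem_Iic.2 (by omega)) (by omega)
              · intro i hi
                constructor
                · calc (2:ℕ) ^ k ≤ t m := hbm ▸ hlow m (by omega)
                    _ ≤ t (m + i) := hmono m (m + i) (by omega) (by omega)
                · calc t (m + i) ≤ t (M + 1) := hmono (m + i) (M + 1) (by omega) hMJ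
                    _ < 2 ^ (k + 1) := hbM1 ▸ hhigh (M + 1) hMJ
    calc ∑ k ∈ Finset.range (b J + 1), _ ≤
        ∑ k ∈ Finset.range (b J + 1),
          (variationSeminorm r (Set.Ico (2 ^ k) (2 ^ (k + 1))) a) ^ r :=
          Finset.sum_le_sum hinner
      _ ≤ T := hTdef ▸ ENNReal.sum_le_tsum _
  -- bound for x
  have hX : ∑ j ∈ Finset.range J, x j ^ r ≤ T := by
    have h1 : ∑ j ∈ Finset.range J, x j ^ r
        = ∑ j ∈ (Finset.range J).filter (fun j => b j ≠ b (j + 1)),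
            (‖a (t (j + 1)) - a (2 ^ (b (j + 1)))‖₊ : ℝ≥0∞) ^ r := by
      rw [Finset.sum_filter]
      refine Finset.sum_congr rfl fun j _ => ?_
      by_cases hj : b j = b (j + 1) <;>
        simp [hxdef, hj, ENNReal.zero_rpow_of_pos hr0]
    rw [h1]
    have hterm : ∀ j ∈ (Finset.range J).filter (fun j => b j ≠ b (j + 1)),
        (‖a (t (j + 1)) - a (2 ^ (b (j + 1)))‖₊ : ℝ≥0∞) ^ r ≤
          (variationSeminorm r (Set.Ico (2 ^ (b (j + 1))) (2 ^ (b (j + 1) + 1))) a) ^ r := by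
      intro j hj
      simp only [Finset.mem_filter, Finset.mem_range] at hj
      refine ENNReal.rpow_le_rpow ?_ hr0.le
      exact pair_le_var hr0 (hlow (j + 1) (by omega)) (hself _) (hIco (j + 1) (by omega))
    have hinj : ∀ j ∈ (Finset.range J).filter (fun j => b j ≠ b (j + 1)),
        ∀ j' ∈ (Finset.range J).filter (fun j => b j ≠ b (j + 1)),
          b (j + 1) = b (j' + 1) → j = j' := by
      intro j hj j' hj'
      simp only [Finset.mem_filter, Finset.mem_range] at hj hj'
      intro hbe
      by_contra hne
      rcases Nat.lt_or_ge j j' with h | h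
      · have h1 : b (j + 1) ≤ b j' := hble (j + 1) j' (by omega) (by omega)
        have h2 : b j' < b (j' + 1) :=
          lt_of_le_of_ne (hble j' (j' + 1) (by omega) (by omega)) hj'.2
        omega
      · have hlt : j' < j := by omega
        have h1 : b (j' + 1) ≤ b j := hble (j' + 1) j (by omega) (by omega)
        have h2 : b j < b (j + 1) :=
          lt_of_le_of_ne (hble j (j + 1) (by omega) (by omega)) hj.2
        omega
    calc ∑ j ∈ (Finset.range J).filter (fun j => b j ≠ b (j + 1)),
          (‖a (t (j + 1)) - a (2 ^ (b (j + 1)))‖₊ : ℝ≥0∞) ^ r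
        ≤ ∑ j ∈ (Finset.range J).filter (fun j => b j ≠ b (j + 1)),
          (variationSeminorm r (Set.Ico (2 ^ (b (j + 1))) (2 ^ (b (j + 1) + 1))) a) ^ r :=
          Finset.sum_le_sum hterm
      _ = ∑ k ∈ ((Finset.range J).filter (fun j => b j ≠ b (j + 1))).image
            (fun j => b (j + 1)),
          (variationSeminorm r (Set.Ico (2 ^ k) (2 ^ (k + 1))) a) ^ r :=
          (Finset.sum_image (g := fun j => b (j + 1))
            (f := fun k => variationSeminorm r (Set.Ico (2 ^ k) (2 ^ (k + 1))) a ^ r)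
            hinj).symm
      _ ≤ T := hTdef ▸ ENNReal.sum_le_tsum _
  -- bound for z
  have hZ : ∑ j ∈ Finset.range J, z j ^ r ≤ T := by
    have h1 : ∑ j ∈ Finset.range J, z j ^ r
        = ∑ j ∈ (Finset.range J).filter (fun j => b j ≠ b (j + 1)),
            (‖a (2 ^ (b j)) - a (t j)‖₊ : ℝ≥0∞) ^ r := by
      rw [Finset.sum_filter]
      refine Finset.sum_congr rfl fun j _ => ?_
      by_cases hj : b j = b (j + 1) <;>
        simp [hzdef, hj, ENNReal.zero_rpow_of_pos hr0]
    rw [h1]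
    have hterm : ∀ j ∈ (Finset.range J).filter (fun j => b j ≠ b (j + 1)),
        (‖a (2 ^ (b j)) - a (t j)‖₊ : ℝ≥0∞) ^ r ≤
          (variationSeminorm r (Set.Ico (2 ^ (b j)) (2 ^ (b j + 1))) a) ^ r := by
      intro j hj
      simp only [Finset.mem_filter, Finset.mem_range] at hj
      refine ENNReal.rpow_le_rpow ?_ hr0.le
      have hflip : ‖a (2 ^ (b j)) - a (t j)‖₊ = ‖a (t j) - a (2 ^ (b j))‖₊ := by
        rw [← neg_sub, nnnorm_neg]
      rw [hflip]
      exact pair_le_var hr0 (hlow j (by omega)) (hself _) (hIco j (by omega))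
    have hinj : ∀ j ∈ (Finset.range J).filter (fun j => b j ≠ b (j + 1)),
        ∀ j' ∈ (Finset.range J).filter (fun j => b j ≠ b (j + 1)),
          b j = b j' → j = j' := by
      intro j hj j' hj'
      simp only [Finset.mem_filter, Finset.mem_range] at hj hj'
      intro hbe
      by_contra hne
      rcases Nat.lt_or_ge j j' with h | h
      · have h1 : b (j + 1) ≤ b j' := hble (j + 1) j' (by omega) (by omega)
        have h2 : b j < b (j + 1) :=
          lt_of_le_of_ne (hble j (j + 1) (by omega) (by omega)) hj.2
        omega
      · have hlt : j' < j := by omega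
        have h1 : b (j' + 1) ≤ b j := hble (j' + 1) j (by omega) (by omega)
        have h2 : b j' < b (j' + 1) :=
          lt_of_le_of_ne (hble j' (j' + 1) (by omega) (by omega)) hj'.2
        omega
    calc ∑ j ∈ (Finset.range J).filter (fun j => b j ≠ b (j + 1)),
          (‖a (2 ^ (b j)) - a (t j)‖₊ : ℝ≥0∞) ^ r
        ≤ ∑ j ∈ (Finset.range J).filter (fun j => b j ≠ b (j + 1)),
          (variationSeminorm r (Set.Ico (2 ^ (b j)) (2 ^ (b j + 1))) a) ^ r :=
          Finset.sum_le_sum hterm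
      _ = ∑ k ∈ ((Finset.range J).filter (fun j => b j ≠ b (j + 1))).image (fun j => b j),
          (variationSeminorm r (Set.Ico (2 ^ k) (2 ^ (k + 1))) a) ^ r :=
          (Finset.sum_image (g := fun j => b j)
            (f := fun k => variationSeminorm r (Set.Ico (2 ^ k) (2 ^ (k + 1))) a ^ r)
            hinj).symm
      _ ≤ T := hTdef ▸ ENNReal.sum_le_tsum _
  -- bound for y : long variation
  have hY : ∑ j ∈ Finset.range J, y j ^ r ≤ L ^ r := by
    have h1 : ∑ j ∈ Finset.range J, y j ^ r
        = ∑ j ∈ (Finset.range J).filter (fun j => b j ≠ b (j + 1)),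
            (‖a (2 ^ (b (j + 1))) - a (2 ^ (b j))‖₊ : ℝ≥0∞) ^ r := by
      rw [Finset.sum_filter]
      refine Finset.sum_congr rfl fun j _ => ?_
      by_cases hj : b j = b (j + 1) <;>
        simp [hydef, hj, ENNReal.zero_rpow_of_pos hr0]
    rw [h1]
    obtain ⟨m, u, hu, -, hsum⟩ := chain_sum (r := r) (fun k => a (2 ^ k)) b J
      (fun j hj => hble j (j + 1) (by omega) (by omega))
    refine hsum.trans ?_
    refine sum_le_var_rpow hr0 (t := fun i => 2 ^ u i) ?_ ?_
    · intro i hi i' hi' hii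
      exact Nat.pow_lt_pow_right (by norm_num) (hu hi hi' hii)
    · intro i _
      exact ⟨u i, rfl⟩
  -- assemble
  have step1 : (∑ j ∈ Finset.range J, (‖a (t (j + 1)) - a (t j)‖₊ : ℝ≥0∞) ^ r) ^ (1 / r)
      ≤ (∑ j ∈ Finset.range J, (x j + y j + z j + w j) ^ r) ^ (1 / r) := by
    refine ENNReal.rpow_le_rpow ?_ (by positivity)
    exact Finset.sum_le_sum fun j _ => ENNReal.rpow_le_rpow (hpt j) hr0.le
  have mink : (∑ j ∈ Finset.range J, (x j + y j + z j + w j) ^ r) ^ (1 / r)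
      ≤ (∑ j ∈ Finset.range J, x j ^ r) ^ (1 / r)
        + (∑ j ∈ Finset.range J, y j ^ r) ^ (1 / r)
        + (∑ j ∈ Finset.range J, z j ^ r) ^ (1 / r)
        + (∑ j ∈ Finset.range J, w j ^ r) ^ (1 / r) := by
    calc (∑ j ∈ Finset.range J, (x j + y j + z j + w j) ^ r) ^ (1 / r)
        ≤ (∑ j ∈ Finset.range J, (x j + y j + z j) ^ r) ^ (1 / r)
          + (∑ j ∈ Finset.range J, w j ^ r) ^ (1 / r) :=
          ENNReal.Lp_add_le _ _ _ hr1
      _ ≤ ((∑ j ∈ Finset.range J, (x j + y j) ^ r) ^ (1 / r)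
          + (∑ j ∈ Finset.range J, z j ^ r) ^ (1 / r))
          + (∑ j ∈ Finset.range J, w j ^ r) ^ (1 / r) :=
          add_le_add_left (ENNReal.Lp_add_le _ _ _ hr1) _
      _ ≤ (((∑ j ∈ Finset.range J, x j ^ r) ^ (1 / r)
          + (∑ j ∈ Finset.range J, y j ^ r) ^ (1 / r))
          + (∑ j ∈ Finset.range J, z j ^ r) ^ (1 / r))
          + (∑ j ∈ Finset.range J, w j ^ r) ^ (1 / r) :=
          add_le_add_left (add_le_add_left (ENNReal.Lp_add_le _ _ _ hr1) _) _
  have hXr : (∑ j ∈ Finset.range J, x j ^ r) ^ (1 / r) ≤ T ^ (1 / r) :=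
    ENNReal.rpow_le_rpow hX (by positivity)
  have hZr : (∑ j ∈ Finset.range J, z j ^ r) ^ (1 / r) ≤ T ^ (1 / r) :=
    ENNReal.rpow_le_rpow hZ (by positivity)
  have hWr : (∑ j ∈ Finset.range J, w j ^ r) ^ (1 / r) ≤ T ^ (1 / r) :=
    ENNReal.rpow_le_rpow hW (by positivity)
  have hYr : (∑ j ∈ Finset.range J, y j ^ r) ^ (1 / r) ≤ L := by
    have h := ENNReal.rpow_le_rpow hY (le_of_lt (by positivity : (0:ℝ) < 1 / r))
    rwa [show (L ^ r) ^ (1 / r) = L from by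
      rw [one_div, ENNReal.rpow_rpow_inv hr0.ne']] at h
  calc (∑ j ∈ Finset.range J, (‖a (t (j + 1)) - a (t j)‖₊ : ℝ≥0∞) ^ r) ^ (1 / r)
      ≤ (∑ j ∈ Finset.range J, x j ^ r) ^ (1 / r)
        + (∑ j ∈ Finset.range J, y j ^ r) ^ (1 / r)
        + (∑ j ∈ Finset.range J, z j ^ r) ^ (1 / r)
        + (∑ j ∈ Finset.range J, w j ^ r) ^ (1 / r) := step1.trans mink
    _ ≤ T ^ (1 / r) + L + T ^ (1 / r) + T ^ (1 / r) :=
        add_le_add (add_le_add (add_le_add hXr hYr) hZr) hWr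
    _ = L + 3 * T ^ (1 / r) := by ring
    _ ≤ 3 * L + 3 * T ^ (1 / r) := by
        refine add_le_add_left ?_ _
        nth_rewrite 1 [← one_mul L]
        exact mul_le_mul_left (by norm_num) _
    _ = 3 * (L + T ^ (1 / r)) := by ring
end
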